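/- arXiv:2509.25040 — 2 statements merged into one kernel-verified Lean document; each statement's English description precedes it below -/
import Mathlib

section
/- Consider N particles on S^{d−1} evolving by ẋ_i(t) = (1/Z_β(x_i)) Σ_{j=1}^N e^{β⟨x_i,x_j⟩} P_{x_i}(x_j), with Z_β(x_i) = Σ_j e^{β⟨x_i,x_j⟩} (the case Q^T K = V = Id). Suppose at initialization there is a unique pair (ī, j̄) with ⟨x_ī(0), x_j̄(0)⟩ = max_{i≠j} ⟨x_i(0), x_j(0)⟩. Rescale time by dτ = e^{β(1 − ⟨x_ī(t), x_j̄(t)⟩)} dt. Then for every ε > 0, as β → ∞, the rescaled solutions x_i converge, uniformly on intervals [0, T_ε], to the solutions y_i of the system: ẏ_ī = P_{y_ī}(y_j̄), ẏ_j̄ = P_{y_j̄}(y_ī), ẏ_k = 0 for k ∉ {ī, j̄}, with y_i(0) = x_i(0), where T_ε is such that ⟨y_ī(t), y_j̄(t)⟩ ≤ 1 − ε for all t ∈ [0, T_ε]. -/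
open MeasureTheory Filter Topology Matrix
open scoped InnerProductSpace ENNReal NNReal

noncomputable section
namespace Paper

abbrev E (d : ℕ) := EuclideanSpace ℝ (Fin d)

def sph (d : ℕ) : Set (E d) := Metric.sphere (0 : E d) 1

def surf (d : ℕ) : Measure (E d) := (μH[(d : ℝ) - 1]).restrict (sph d)

def M2E {d : ℕ} (A : Matrix (Fin d) (Fin d) ℝ) : E d →ₗ[ℝ] E d := Matrix.toEuclideanLin A

def P {d : ℕ} (x y : E d) : E d := y - ⟪x, y⟫_ℝ • x

def chi {d : ℕ} (B V : Matrix (Fin d) (Fin d) ℝ) (β : ℝ) (μ : Measure (E d)) (x : E d) : E d :=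
  (∫ y, Real.exp (β * ⟪x, M2E B y⟫_ℝ) ∂μ)⁻¹ •
    ∫ y, Real.exp (β * ⟪x, M2E B y⟫_ℝ) • P x (M2E V y) ∂μ

def W1 {d : ℕ} (m m' : Measure (E d)) : ℝ :=
  ⨆ f : {f : E d → ℝ // LipschitzWith 1 f}, |∫ x, f.1 x ∂m - ∫ x, f.1 x ∂m'|

def BL {d : ℕ} (m m' : Measure (E d)) : ℝ :=
  ⨆ f : {f : E d → ℝ // LipschitzWith 1 f ∧ ∀ x, |f x| ≤ 1},
    |∫ x, f.1 x ∂m - ∫ x, f.1 x ∂m'|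

def emp {d N : ℕ} (x : Fin N → E d) : Measure (E d) :=
  (N : ℝ≥0∞)⁻¹ • ∑ i, Measure.dirac (x i)

def IsWeakSolution {d : ℕ} (v : ℝ → E d → E d) (μ : ℝ → Measure (E d)) : Prop :=
  ∀ f : E d → ℝ, ContDiff ℝ 2 f → ∀ t : ℝ, 0 ≤ t →
    ∫ x, f x ∂(μ t) - ∫ x, f x ∂(μ 0)
      = ∫ s in Set.Icc (0:ℝ) t, ∫ x, fderiv ℝ f x (v s x) ∂(μ s)

def IsWeakSolutionOn {d : ℕ} (v : ℝ → E d → E d) (μ : ℝ → Measure (E d)) (T : ℝ) : Prop :=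
  ∀ f : E d → ℝ, ContDiff ℝ 2 f → ∀ t ∈ Set.Icc (0:ℝ) T,
    ∫ x, f x ∂(μ t) - ∫ x, f x ∂(μ 0)
      = ∫ s in Set.Icc (0:ℝ) t, ∫ x, fderiv ℝ f x (v s x) ∂(μ s)

def limitField {d : ℕ} (B V : Matrix (Fin d) (Fin d) ℝ) (x : E d) : E d :=
  ‖M2E Bᵀ x‖⁻¹ • P x (M2E V (M2E Bᵀ x))

def ext0 {d : ℕ} {F : Type*} (f : E d → F) (y : E d) : F := f (‖y‖⁻¹ • y)

def sphGrad {d : ℕ} (f : E d → ℝ) (x : E d) : E d := gradient (ext0 f) x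

def sphDiv {d : ℕ} (v : E d → E d) (x : E d) : ℝ :=
  ∑ i : Fin d, ⟪EuclideanSpace.single i (1:ℝ), fderiv ℝ (ext0 v) x (EuclideanSpace.single i (1:ℝ))⟫_ℝ

def sphLap {d : ℕ} (f : E d → ℝ) (x : E d) : ℝ := sphDiv (sphGrad f) x

def tilt {d : ℕ} (B : Matrix (Fin d) (Fin d) ℝ) (β : ℝ) (μ : Measure (E d)) (x : E d) :
    Measure (E d) :=
  μ.withDensity fun y =>
    ENNReal.ofReal (Real.exp (β * ⟪x, M2E B y⟫_ℝ) / ∫ z, Real.exp (β * ⟪x, M2E B z⟫_ℝ) ∂μ)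

def mean {d : ℕ} (ν : Measure (E d)) : E d := ∫ y, y ∂ν

def mom2 {d : ℕ} (ν : Measure (E d)) : ℝ :=
  ⨆ u : sph d, ⨆ v : sph d,
    |∫ y, ⟪y - mean ν, (u : E d)⟫_ℝ * ⟪y - mean ν, (v : E d)⟫_ℝ ∂ν|

def mom3 {d : ℕ} (ν : Measure (E d)) : ℝ :=
  ⨆ u : sph d, ⨆ v : sph d, ⨆ w : sph d,
    |∫ y, ⟪y - mean ν, (u : E d)⟫_ℝ * ⟪y - mean ν, (v : E d)⟫_ℝ *
      ⟪y - mean ν, (w : E d)⟫_ℝ ∂ν|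

def DiniUpper (f : ℝ → ℝ) (t : ℝ) : ℝ := limsup (fun h => (f (t + h) - f t) / h) (𝓝[>] 0)

def DiniLower (f : ℝ → ℝ) (t : ℝ) : ℝ := liminf (fun h => (f (t + h) - f t) / h) (𝓝[>] 0)

def cEnd {d : ℕ} (M : Matrix (Fin d) (Fin d) ℝ) : Module.End ℂ (Fin d → ℂ) :=
  Matrix.toLin' (M.map (algebraMap ℝ ℂ))

def maxRe {d : ℕ} (M : Matrix (Fin d) (Fin d) ℝ) : ℝ :=
  sSup {r : ℝ | ∃ z : ℂ, (cEnd M).HasEigenvalue z ∧ z.re = r}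

def Emax {d : ℕ} (M : Matrix (Fin d) (Fin d) ℝ) : Set (E d) :=
  {v : E d | (fun i => (v i : ℂ)) ∈
    ⨆ z ∈ {z : ℂ | (cEnd M).HasEigenvalue z ∧ z.re = maxRe M},
      Module.End.maxGenEigenspace (cEnd M) z}


/-! ### Auxiliary lemmas for statement4 -/

section Statement4Aux

open Set

lemma aux_inner_abs_le_one {d : ℕ} {x y : E d} (hx : ‖x‖ ≤ 1) (hy : ‖y‖ ≤ 1) :
    |⟪x, y⟫_ℝ| ≤ 1 := by
  calc |⟪x, y⟫_ℝ| ≤ ‖x‖ * ‖y‖ := abs_real_inner_le_norm x y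
  _ ≤ 1 := mul_le_one₀ hx (norm_nonneg y) hy

lemma aux_P_self {d : ℕ} {x : E d} (hx : ‖x‖ = 1) : P x x = 0 := by
  unfold P
  rw [real_inner_self_eq_norm_mul_norm, hx]
  simp

lemma aux_norm_P_le {d : ℕ} {x y : E d} (hx : ‖x‖ ≤ 1) (hy : ‖y‖ ≤ 1) : ‖P x y‖ ≤ 2 := by
  have h1 : ‖P x y‖ ≤ ‖y‖ + ‖⟪x, y⟫_ℝ • x‖ := norm_sub_le _ _
  rw [norm_smul, Real.norm_eq_abs] at h1
  have h3 : |⟪x, y⟫_ℝ| * ‖x‖ ≤ 1 :=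
    mul_le_one₀ (aux_inner_abs_le_one hx hy) (norm_nonneg x) hx
  linarith

lemma aux_inner_diff_le {d : ℕ} {x x' y y' : E d} (hx' : ‖x'‖ ≤ 1) (hy : ‖y‖ ≤ 1) :
    |⟪x, y⟫_ℝ - ⟪x', y'⟫_ℝ| ≤ ‖x - x'‖ + ‖y - y'‖ := by
  have h : ⟪x, y⟫_ℝ - ⟪x', y'⟫_ℝ = ⟪x - x', y⟫_ℝ + ⟪x', y - y'⟫_ℝ := by
    rw [inner_sub_left, inner_sub_right]; ring
  rw [h]
  have h1 : |⟪x - x', y⟫_ℝ| ≤ ‖x - x'‖ * 1 := by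
    calc |⟪x - x', y⟫_ℝ| ≤ ‖x - x'‖ * ‖y‖ := abs_real_inner_le_norm _ _
    _ ≤ ‖x - x'‖ * 1 := by gcongr
  have h2 : |⟪x', y - y'⟫_ℝ| ≤ 1 * ‖y - y'‖ := by
    calc |⟪x', y - y'⟫_ℝ| ≤ ‖x'‖ * ‖y - y'‖ := abs_real_inner_le_norm _ _
    _ ≤ 1 * ‖y - y'‖ := by gcongr
  calc |⟪x - x', y⟫_ℝ + ⟪x', y - y'⟫_ℝ| ≤ |⟪x - x', y⟫_ℝ| + |⟪x', y - y'⟫_ℝ| := abs_add_le _ _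
  _ ≤ ‖x - x'‖ + ‖y - y'‖ := by linarith

lemma aux_P_lip {d : ℕ} {x x' y y' : E d} (hx : ‖x‖ ≤ 1) (hx' : ‖x'‖ ≤ 1) (hy : ‖y‖ ≤ 1)
    (hy' : ‖y'‖ ≤ 1) : ‖P x y - P x' y'‖ ≤ 2 * ‖x - x'‖ + 2 * ‖y - y'‖ := by
  have h : P x y - P x' y' = (y - y') - ⟪x, y⟫_ℝ • (x - x') - (⟪x, y⟫_ℝ - ⟪x', y'⟫_ℝ) • x' := by
    unfold P
    rw [sub_smul, smul_sub]
    abel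
  rw [h]
  have h2 : |⟪x, y⟫_ℝ| ≤ 1 := aux_inner_abs_le_one hx hy
  have h3 := aux_inner_diff_le (x := x) (y := y) (x' := x') (y' := y') hx' hy
  have h4 : ‖⟪x, y⟫_ℝ • (x - x')‖ ≤ 1 * ‖x - x'‖ := by
    rw [norm_smul, Real.norm_eq_abs]; gcongr
  have h5 : ‖(⟪x, y⟫_ℝ - ⟪x', y'⟫_ℝ) • x'‖ ≤ (‖x - x'‖ + ‖y - y'‖) * 1 := by
    rw [norm_smul, Real.norm_eq_abs]
    apply mul_le_mul h3 hx' (norm_nonneg _)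
    positivity
  calc ‖(y - y') - ⟪x, y⟫_ℝ • (x - x') - (⟪x, y⟫_ℝ - ⟪x', y'⟫_ℝ) • x'‖
      ≤ ‖(y - y') - ⟪x, y⟫_ℝ • (x - x')‖ + ‖(⟪x, y⟫_ℝ - ⟪x', y'⟫_ℝ) • x'‖ := norm_sub_le _ _
    _ ≤ (‖y - y'‖ + ‖⟪x, y⟫_ℝ • (x - x')‖) + ‖(⟪x, y⟫_ℝ - ⟪x', y'⟫_ℝ) • x'‖ := by
        gcongr; exact norm_sub_le _ _
    _ ≤ 2 * ‖x - x'‖ + 2 * ‖y - y'‖ := by linarith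

lemma aux_inner_P_right {d : ℕ} (x y z : E d) :
    ⟪z, P x y⟫_ℝ = ⟪z, y⟫_ℝ - ⟪x, y⟫_ℝ * ⟪z, x⟫_ℝ := by
  unfold P
  rw [inner_sub_right, real_inner_smul_right]

lemma aux_pair_norm_one {d : ℕ} {u v : ℝ → E d} {T : ℝ}
    (hu : ∀ t, HasDerivAt u (P (u t) (v t)) t) (hv : ∀ t, HasDerivAt v (P (v t) (u t)) t)
    (hu0 : ‖u 0‖ = 1) (hv0 : ‖v 0‖ = 1) :
    ∀ t ∈ Set.Icc (0:ℝ) T, ‖u t‖ = 1 ∧ ‖v t‖ = 1 := by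
  rcases lt_or_ge T 0 with hT | hT
  · intro t ht; exact absurd (ht.1.trans ht.2) (not_le.2 hT)
  have hucont : Continuous u := continuous_iff_continuousAt.2 fun t => (hu t).continuousAt
  have hvcont : Continuous v := continuous_iff_continuousAt.2 fun t => (hv t).continuousAt
  have hscont : Continuous fun t => ⟪u t, v t⟫_ℝ := hucont.inner hvcont
  obtain ⟨C, hC⟩ := isCompact_Icc.exists_bound_of_continuousOn
    (hscont.continuousOn : ContinuousOn (fun t => ⟪u t, v t⟫_ℝ) (Icc (0:ℝ) T))
  set f : ℝ → ℝ × ℝ := fun t => (⟪u t, u t⟫_ℝ - 1, ⟪v t, v t⟫_ℝ - 1) with hf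
  set f' : ℝ → ℝ × ℝ := fun t =>
    (-(2 * ⟪u t, v t⟫_ℝ * (⟪u t, u t⟫_ℝ - 1)), -(2 * ⟪u t, v t⟫_ℝ * (⟪v t, v t⟫_ℝ - 1))) with hf'
  have hder : ∀ t, HasDerivAt f (f' t) t := by
    intro t
    have h1 : HasDerivAt (fun t => ⟪u t, u t⟫_ℝ - 1)
        (⟪u t, P (u t) (v t)⟫_ℝ + ⟪P (u t) (v t), u t⟫_ℝ) t :=
      ((hu t).inner ℝ (hu t)).sub_const 1
    have h2 : HasDerivAt (fun t => ⟪v t, v t⟫_ℝ - 1)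
        (⟪v t, P (v t) (u t)⟫_ℝ + ⟪P (v t) (u t), v t⟫_ℝ) t :=
      ((hv t).inner ℝ (hv t)).sub_const 1
    have a2 : ⟪P (u t) (v t), u t⟫_ℝ = ⟪u t, P (u t) (v t)⟫_ℝ := real_inner_comm _ _
    have a2' : ⟪P (v t) (u t), v t⟫_ℝ = ⟪v t, P (v t) (u t)⟫_ℝ := real_inner_comm _ _
    have e1 : ⟪u t, P (u t) (v t)⟫_ℝ + ⟪P (u t) (v t), u t⟫_ℝ
        = -(2 * ⟪u t, v t⟫_ℝ * (⟪u t, u t⟫_ℝ - 1)) := by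
      rw [a2, aux_inner_P_right]; ring
    have e2 : ⟪v t, P (v t) (u t)⟫_ℝ + ⟪P (v t) (u t), v t⟫_ℝ
        = -(2 * ⟪u t, v t⟫_ℝ * (⟪v t, v t⟫_ℝ - 1)) := by
      rw [a2', aux_inner_P_right, real_inner_comm (v t) (u t)]; ring
    rw [e1] at h1
    rw [e2] at h2
    exact h1.prodMk h2
  have hbound : ∀ t ∈ Ico (0:ℝ) T, ‖f' t‖ ≤ (2 * |C|) * ‖f t‖ + 0 := by
    intro t ht
    have hCt : 2 * |⟪u t, v t⟫_ℝ| ≤ 2 * |C| := by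
      have := hC t ⟨ht.1, le_of_lt ht.2⟩
      rw [Real.norm_eq_abs] at this
      have := this.trans (le_abs_self C)
      linarith
    have h1 : |⟪u t, u t⟫_ℝ - 1| ≤ ‖f t‖ := by
      simpa [hf, Real.norm_eq_abs] using norm_fst_le (f t)
    have h2 : |⟪v t, v t⟫_ℝ - 1| ≤ ‖f t‖ := by
      simpa [hf, Real.norm_eq_abs] using norm_snd_le (f t)
    rw [add_zero, hf', Prod.norm_def]
    apply max_le
    · rw [Real.norm_eq_abs, abs_neg, abs_mul, abs_mul, abs_two]
      exact mul_le_mul hCt h1 (abs_nonneg _) (by positivity)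
    · rw [Real.norm_eq_abs, abs_neg, abs_mul, abs_mul, abs_two]
      exact mul_le_mul hCt h2 (abs_nonneg _) (by positivity)
  have h0 : ‖f 0‖ ≤ 0 := by
    have e1 : ⟪u 0, u 0⟫_ℝ = 1 := by
      rw [real_inner_self_eq_norm_mul_norm, hu0]; norm_num
    have e2 : ⟪v 0, v 0⟫_ℝ = 1 := by
      rw [real_inner_self_eq_norm_mul_norm, hv0]; norm_num
    have hf0 : f 0 = 0 := by
      show (⟪u 0, u 0⟫_ℝ - 1, ⟪v 0, v 0⟫_ℝ - 1) = 0
      rw [e1, e2]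
      norm_num
    rw [hf0, norm_zero]
  have main := norm_le_gronwallBound_of_norm_deriv_right_le
    (f := f) (f' := f') (δ := 0) (K := 2 * |C|) (ε := 0) (a := 0) (b := T)
    (continuous_iff_continuousAt.2 fun t => (hder t).continuousAt).continuousOn
    (fun t _ => (hder t).hasDerivWithinAt) h0 hbound
  intro t ht
  have hft : ‖f t‖ ≤ 0 := by
    have := main t ht
    rwa [gronwallBound_ε0, zero_mul] at this
  have hft0 : f t = 0 := norm_le_zero_iff.1 hft
  have e1 : ⟪u t, u t⟫_ℝ - 1 = 0 := congrArg Prod.fst hft0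
  have e2 : ⟪v t, v t⟫_ℝ - 1 = 0 := congrArg Prod.snd hft0
  constructor
  · have h : ‖u t‖ * ‖u t‖ = 1 := by
      rw [← real_inner_self_eq_norm_mul_norm]; linarith
    rcases mul_self_eq_one_iff.1 h with h' | h'
    · exact h'
    · have := norm_nonneg (u t); linarith
  · have h : ‖v t‖ * ‖v t‖ = 1 := by
      rw [← real_inner_self_eq_norm_mul_norm]; linarith
    rcases mul_self_eq_one_iff.1 h with h' | h'
    · exact h'
    · have := norm_nonneg (v t); linarith

lemma aux_hasDerivAt_s {d : ℕ} {u v : ℝ → E d} {t : ℝ}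
    (hu : HasDerivAt u (P (u t) (v t)) t) (hv : HasDerivAt v (P (v t) (u t)) t) :
    HasDerivAt (fun t => ⟪u t, v t⟫_ℝ)
      (⟪u t, u t⟫_ℝ + ⟪v t, v t⟫_ℝ - 2 * ⟪u t, v t⟫_ℝ * ⟪u t, v t⟫_ℝ) t := by
  have h := hu.inner ℝ hv
  have e : ⟪u t, P (v t) (u t)⟫_ℝ + ⟪P (u t) (v t), v t⟫_ℝ
      = ⟪u t, u t⟫_ℝ + ⟪v t, v t⟫_ℝ - 2 * ⟪u t, v t⟫_ℝ * ⟪u t, v t⟫_ℝ := by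
    rw [real_inner_comm (v t) (P (u t) (v t)), aux_inner_P_right, aux_inner_P_right,
      real_inner_comm (u t) (v t)]
    ring
  rwa [e] at h

lemma aux_s_mono {d : ℕ} {u v : ℝ → E d} {T : ℝ}
    (hu : ∀ t, HasDerivAt u (P (u t) (v t)) t) (hv : ∀ t, HasDerivAt v (P (v t) (u t)) t)
    (hun : ∀ t ∈ Set.Icc (0:ℝ) T, ‖u t‖ = 1) (hvn : ∀ t ∈ Set.Icc (0:ℝ) T, ‖v t‖ = 1) :
    MonotoneOn (fun t => ⟪u t, v t⟫_ℝ) (Set.Icc (0:ℝ) T) := by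
  have hder : ∀ t, HasDerivAt (fun t => ⟪u t, v t⟫_ℝ)
      (⟪u t, u t⟫_ℝ + ⟪v t, v t⟫_ℝ - 2 * ⟪u t, v t⟫_ℝ * ⟪u t, v t⟫_ℝ) t :=
    fun t => aux_hasDerivAt_s (hu t) (hv t)
  apply monotoneOn_of_deriv_nonneg (convex_Icc 0 T)
  · exact (continuous_iff_continuousAt.2 fun t => (hder t).continuousAt).continuousOn
  · exact fun t _ => ((hder t).differentiableAt).differentiableWithinAt
  · intro t ht
    rw [interior_Icc] at ht
    have htm : t ∈ Set.Icc (0:ℝ) T := Ioo_subset_Icc_self ht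
    rw [(hder t).deriv]
    have h1 : ⟪u t, u t⟫_ℝ = 1 := by
      rw [real_inner_self_eq_norm_mul_norm, hun t htm]; norm_num
    have h2 : ⟪v t, v t⟫_ℝ = 1 := by
      rw [real_inner_self_eq_norm_mul_norm, hvn t htm]; norm_num
    have h3 : |⟪u t, v t⟫_ℝ| ≤ 1 := by
      have := abs_real_inner_le_norm (u t) (v t)
      rw [hun t htm, hvn t htm] at this
      simpa using this
    rw [h1, h2]
    nlinarith [abs_le.1 h3]

lemma aux_gap_persist {d : ℕ} {u v : ℝ → E d} {T η : ℝ} (hT : 0 ≤ T) (hη : 0 < η)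
    (hu : ∀ t, HasDerivAt u (P (u t) (v t)) t) (hv : ∀ t, HasDerivAt v (P (v t) (u t)) t)
    (hun : ∀ t ∈ Set.Icc (0:ℝ) T, ‖u t‖ = 1) (hvn : ∀ t ∈ Set.Icc (0:ℝ) T, ‖v t‖ = 1)
    (w : E d) (hw : ‖w‖ = 1) (hη0 : η ≤ ⟪u 0, v 0⟫_ℝ - ⟪u 0, w⟫_ℝ) :
    ∀ t ∈ Set.Icc (0:ℝ) T, η * Real.exp (-T) ≤ ⟪u t, v t⟫_ℝ - ⟪u t, w⟫_ℝ := by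
  set s : ℝ → ℝ := fun t => ⟪u t, v t⟫_ℝ with hs
  set g : ℝ → ℝ := fun t => ⟪u t, v t⟫_ℝ - ⟪u t, w⟫_ℝ with hg
  have hscont : Continuous s :=
    (continuous_iff_continuousAt.2 fun t => (hu t).continuousAt).inner
      (continuous_iff_continuousAt.2 fun t => (hv t).continuousAt)
  set I : ℝ → ℝ := fun t => ∫ τ in (0:ℝ)..t, s τ with hI
  have hIder : ∀ t, HasDerivAt I (s t) t := by
    intro t
    exact intervalIntegral.integral_hasDerivAt_right
      (hscont.intervalIntegrable _ _)
      (hscont.stronglyMeasurableAtFilter _ _)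
      hscont.continuousAt
  have hgder : ∀ t, HasDerivAt g
      ((⟪u t, u t⟫_ℝ + ⟪v t, v t⟫_ℝ - 2 * s t * s t) - (⟪v t, w⟫_ℝ - s t * ⟪u t, w⟫_ℝ)) t := by
    intro t
    have h1 := aux_hasDerivAt_s (hu t) (hv t)
    have h2 := (hu t).inner ℝ (hasDerivAt_const t w)
    have e2 : ⟪u t, (0:E d)⟫_ℝ + ⟪P (u t) (v t), w⟫_ℝ = ⟪v t, w⟫_ℝ - s t * ⟪u t, w⟫_ℝ := by
      rw [inner_zero_right, real_inner_comm w (P (u t) (v t)), aux_inner_P_right,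
        real_inner_comm w (v t), real_inner_comm w (u t)]
      ring
    rw [e2] at h2
    exact h1.sub h2
  set φ : ℝ → ℝ := fun t => g t * Real.exp (I t) with hφ
  have hφder : ∀ t, HasDerivAt φ
      (((⟪u t, u t⟫_ℝ + ⟪v t, v t⟫_ℝ - 2 * s t * s t) - (⟪v t, w⟫_ℝ - s t * ⟪u t, w⟫_ℝ))
          * Real.exp (I t)
        + g t * (Real.exp (I t) * s t)) t :=
    fun t => (hgder t).mul ((hIder t).exp)
  have hφmono : MonotoneOn φ (Set.Icc (0:ℝ) T) := by
    apply monotoneOn_of_deriv_nonneg (convex_Icc 0 T)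
    · exact (continuous_iff_continuousAt.2 fun t => (hφder t).continuousAt).continuousOn
    · exact fun t _ => ((hφder t).differentiableAt).differentiableWithinAt
    · intro t ht
      rw [interior_Icc] at ht
      have htm : t ∈ Set.Icc (0:ℝ) T := Ioo_subset_Icc_self ht
      rw [(hφder t).deriv]
      have h1 : ⟪u t, u t⟫_ℝ = 1 := by
        rw [real_inner_self_eq_norm_mul_norm, hun t htm]; norm_num
      have h2 : ⟪v t, v t⟫_ℝ = 1 := by
        rw [real_inner_self_eq_norm_mul_norm, hvn t htm]; norm_num
      have h3 : |s t| ≤ 1 := by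
        have := abs_real_inner_le_norm (u t) (v t)
        rw [hun t htm, hvn t htm] at this
        simpa [hs] using this
      have h4 : ⟪v t, w⟫_ℝ ≤ 1 := by
        have := real_inner_le_norm (v t) w
        rw [hvn t htm, hw] at this
        simpa using this
      have key : 0 ≤ ((⟪u t, u t⟫_ℝ + ⟪v t, v t⟫_ℝ - 2 * s t * s t)
          - (⟪v t, w⟫_ℝ - s t * ⟪u t, w⟫_ℝ)) + g t * s t := by
        have hgt : g t = s t - ⟪u t, w⟫_ℝ := rfl
        rw [h1, h2, hgt]
        nlinarith [abs_le.1 h3]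
      have hexp : 0 < Real.exp (I t) := Real.exp_pos _
      nlinarith [key, hexp]
  intro t ht
  have hI0 : I 0 = 0 := by simp [hI]
  have hφ0 : φ 0 = g 0 := by simp [hφ, hI0]
  have hmono := hφmono (left_mem_Icc.2 hT) ht ht.1
  have hφt : η ≤ φ t := by
    rw [hφ0] at hmono
    exact le_trans hη0 hmono
  have hIle : I t ≤ T := by
    have h1 : I t ≤ ∫ τ in (0:ℝ)..t, (1:ℝ) := by
      apply intervalIntegral.integral_mono_on ht.1
        (hscont.intervalIntegrable _ _)
        (intervalIntegrable_const)
      intro τ hτ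
      have hτm : τ ∈ Set.Icc (0:ℝ) T := ⟨hτ.1, hτ.2.trans ht.2⟩
      have := real_inner_le_norm (u τ) (v τ)
      rw [hun τ hτm, hvn τ hτm] at this
      simpa [hs] using this
    have h2 : (∫ τ in (0:ℝ)..t, (1:ℝ)) = t := by simp
    rw [h2] at h1
    linarith [ht.2]
  have hgt : φ t * Real.exp (-I t) = g t := by
    show (g t * Real.exp (I t)) * Real.exp (-I t) = g t
    rw [mul_assoc, ← Real.exp_add]
    simp
  calc η * Real.exp (-T) ≤ η * Real.exp (-I t) := by
        apply mul_le_mul_of_nonneg_left _ hη.le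
        exact Real.exp_le_exp.2 (neg_le_neg hIle)
    _ ≤ φ t * Real.exp (-I t) := by
        apply mul_le_mul_of_nonneg_right hφt (Real.exp_pos _).le
    _ = g t := hgt

lemma aux_sum_bound {N : ℕ} (s : Finset (Fin N)) (f : Fin N → ℝ) (B : ℝ) (hB : 0 ≤ B)
    (h : ∀ j ∈ s, f j ≤ B) : ∑ j ∈ s, f j ≤ N * B := by
  calc ∑ j ∈ s, f j ≤ ∑ _j ∈ s, B := Finset.sum_le_sum h
  _ = s.card * B := by rw [Finset.sum_const, nsmul_eq_mul]
  _ ≤ N * B := by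
      apply mul_le_mul_of_nonneg_right _ hB
      have h2 := Finset.card_le_univ s
      simp only [Finset.card_univ, Fintype.card_fin] at h2
      exact_mod_cast h2

set_option maxHeartbeats 1000000 in
lemma aux_far_est {d N : ℕ} {β ρ3 sx : ℝ} (hβ : 0 ≤ β) {xv : Fin N → E d} {k : Fin N}
    (hxn : ∀ i, ‖xv i‖ = 1)
    (hoth : ∀ j, j ≠ k → ⟪xv k, xv j⟫_ℝ ≤ sx - ρ3) :
    ‖Real.exp (β * (1 - sx)) •
        ((∑ j, Real.exp (β * ⟪xv k, xv j⟫_ℝ))⁻¹ •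
          ∑ j, Real.exp (β * ⟪xv k, xv j⟫_ℝ) • P (xv k) (xv j))‖
      ≤ 2 * N * Real.exp (-(β * ρ3)) := by
  set Z := ∑ j, Real.exp (β * ⟪xv k, xv j⟫_ℝ) with hZ
  have hkk : ⟪xv k, xv k⟫_ℝ = 1 := by
    rw [real_inner_self_eq_norm_mul_norm, hxn k]; norm_num
  have hZ1 : Real.exp (β * 1) ≤ Z := by
    have h := Finset.single_le_sum (f := fun j => Real.exp (β * ⟪xv k, xv j⟫_ℝ))
      (fun j _ => (Real.exp_pos _).le) (Finset.mem_univ k)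
    simpa [hkk, hxn k] using h
  have hZpos : 0 < Z := lt_of_lt_of_le (Real.exp_pos _) hZ1
  have hZinv : Z⁻¹ ≤ (Real.exp (β * 1))⁻¹ :=
    inv_anti₀ (Real.exp_pos _) hZ1
  have hSum : ‖∑ j, Real.exp (β * ⟪xv k, xv j⟫_ℝ) • P (xv k) (xv j)‖
      ≤ N * (2 * Real.exp (β * (sx - ρ3))) := by
    calc ‖∑ j, Real.exp (β * ⟪xv k, xv j⟫_ℝ) • P (xv k) (xv j)‖
        ≤ ∑ j, ‖Real.exp (β * ⟪xv k, xv j⟫_ℝ) • P (xv k) (xv j)‖ := norm_sum_le _ _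
      _ ≤ N * (2 * Real.exp (β * (sx - ρ3))) := by
          apply aux_sum_bound _ _ _ (by positivity)
          intro j _
          rcases eq_or_ne j k with rfl | hjk
          · rw [aux_P_self (hxn j), smul_zero, norm_zero]
            positivity
          · rw [norm_smul, Real.norm_eq_abs, Real.abs_exp]
            calc Real.exp (β * ⟪xv k, xv j⟫_ℝ) * ‖P (xv k) (xv j)‖
                ≤ Real.exp (β * (sx - ρ3)) * 2 := by
                  apply mul_le_mul _ (aux_norm_P_le (hxn k).le (hxn j).le) (norm_nonneg _)
                    (Real.exp_pos _).le
                  exact Real.exp_le_exp.2 (mul_le_mul_of_nonneg_left (hoth j hjk) hβ)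
              _ = 2 * Real.exp (β * (sx - ρ3)) := mul_comm _ _
  rw [norm_smul, norm_smul, Real.norm_eq_abs, Real.abs_exp, Real.norm_eq_abs,
    abs_of_pos (inv_pos.2 hZpos)]
  calc Real.exp (β * (1 - sx)) * (Z⁻¹ * ‖∑ j, Real.exp (β * ⟪xv k, xv j⟫_ℝ) • P (xv k) (xv j)‖)
      ≤ Real.exp (β * (1 - sx)) * ((Real.exp (β * 1))⁻¹ * (N * (2 * Real.exp (β * (sx - ρ3))))) := by
        apply mul_le_mul_of_nonneg_left _ (Real.exp_pos _).le
        apply mul_le_mul hZinv hSum (norm_nonneg _) (by positivity)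
    _ = (Real.exp (β * (1 - sx)) * (Real.exp (β * 1))⁻¹ * Real.exp (β * (sx - ρ3))) * (2 * N) := by
        ring
    _ = 2 * N * Real.exp (-(β * ρ3)) := by
        rw [← Real.exp_neg, ← Real.exp_add, ← Real.exp_add]
        ring_nf

set_option maxHeartbeats 1000000 in
lemma aux_pair_est {d N : ℕ} {β ρ2 ρ3 : ℝ} (hβ : 0 ≤ β) (hρ2 : 0 ≤ ρ2) (hρ3 : 0 ≤ ρ3)
    {xv : Fin N → E d} {yp yq : E d} {p q : Fin N} (hpq : p ≠ q)
    (hxn : ∀ i, ‖xv i‖ = 1) (hyp1 : ‖yp‖ ≤ 1) (hyq1 : ‖yq‖ ≤ 1)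
    (hsx2 : ⟪xv p, xv q⟫_ℝ ≤ 1 - ρ2)
    (hoth : ∀ j, j ≠ p → j ≠ q → ⟪xv p, xv j⟫_ℝ ≤ ⟪xv p, xv q⟫_ℝ - ρ3) :
    ‖Real.exp (β * (1 - ⟪xv p, xv q⟫_ℝ)) •
        ((∑ j, Real.exp (β * ⟪xv p, xv j⟫_ℝ))⁻¹ •
          ∑ j, Real.exp (β * ⟪xv p, xv j⟫_ℝ) • P (xv p) (xv j)) - P yp yq‖
      ≤ 2 * ‖xv p - yp‖ + 2 * ‖xv q - yq‖
        + 2 * N * Real.exp (-(β * ρ2)) + 2 * N * Real.exp (-(β * ρ3)) := by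
  set sx := ⟪xv p, xv q⟫_ℝ with hsx
  set Z := ∑ j, Real.exp (β * ⟪xv p, xv j⟫_ℝ) with hZdef
  set f : Fin N → E d := fun j => Real.exp (β * ⟪xv p, xv j⟫_ℝ) • P (xv p) (xv j) with hfdef
  set R : E d := ∑ j ∈ (Finset.univ.erase p).erase q, f j with hRdef
  have hpp : ⟪xv p, xv p⟫_ℝ = 1 := by
    rw [real_inner_self_eq_norm_mul_norm, hxn p]; norm_num
  have hqmem : q ∈ Finset.univ.erase p := Finset.mem_erase.2 ⟨(Ne.symm hpq), Finset.mem_univ q⟩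
  have hsplit : (∑ j, f j) = Real.exp (β * sx) • P (xv p) (xv q) + R := by
    have h1 := Finset.add_sum_erase Finset.univ f (Finset.mem_univ p)
    have h2 := Finset.add_sum_erase (Finset.univ.erase p) f hqmem
    have hfp : f p = 0 := by
      rw [hfdef]
      simp only []
      rw [aux_P_self (hxn p), smul_zero]
    rw [← h1, hfp, zero_add, ← h2]
  have hZ1 : Real.exp (β * 1) ≤ Z := by
    have h := Finset.single_le_sum (f := fun j => Real.exp (β * ⟪xv p, xv j⟫_ℝ))
      (fun j _ => (Real.exp_pos _).le) (Finset.mem_univ p)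
    simpa [hpp, hxn p] using h
  have hZpos : 0 < Z := lt_of_lt_of_le (Real.exp_pos _) hZ1
  have hZinv : Z⁻¹ ≤ (Real.exp (β * 1))⁻¹ := inv_anti₀ (Real.exp_pos _) hZ1
  set μ := Real.exp (β * 1) * Z⁻¹ with hμdef
  have hμpos : 0 < μ := mul_pos (Real.exp_pos _) (inv_pos.2 hZpos)
  have hμle1 : μ ≤ 1 := by
    have h := mul_le_mul_of_nonneg_right hZ1 (inv_pos.2 hZpos).le
    rwa [mul_inv_cancel₀ (ne_of_gt hZpos)] at h
  have hZr : Z - Real.exp (β * 1) = ∑ j ∈ Finset.univ.erase p, Real.exp (β * ⟪xv p, xv j⟫_ℝ) := by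
    have h1 := Finset.add_sum_erase Finset.univ
      (fun j => Real.exp (β * ⟪xv p, xv j⟫_ℝ)) (Finset.mem_univ p)
    rw [hZdef, ← h1]
    simp [hpp, hxn p]
  have hZrle : Z - Real.exp (β * 1) ≤ N * Real.exp (β * sx) := by
    rw [hZr]
    apply aux_sum_bound _ _ _ (Real.exp_pos _).le
    intro j hj
    have hjp : j ≠ p := (Finset.mem_erase.1 hj).1
    rcases eq_or_ne j q with rfl | hjq
    · exact le_of_eq rfl
    · have := hoth j hjp hjq
      have h2 : β * ⟪xv p, xv j⟫_ℝ ≤ β * sx := by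
        apply mul_le_mul_of_nonneg_left _ hβ
        linarith
      exact Real.exp_le_exp.2 h2
  have h1μ : 1 - μ ≤ N * Real.exp (-(β * ρ2)) := by
    have e1 : 1 - μ = (Z - Real.exp (β * 1)) * Z⁻¹ := by
      rw [hμdef, sub_mul, mul_inv_cancel₀ (ne_of_gt hZpos)]
    rw [e1]
    calc (Z - Real.exp (β * 1)) * Z⁻¹ ≤ (N * Real.exp (β * sx)) * (Real.exp (β * 1))⁻¹ := by
          apply mul_le_mul hZrle hZinv (inv_pos.2 hZpos).le (by positivity)
      _ = N * (Real.exp (β * sx) * (Real.exp (β * 1))⁻¹) := by ring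
      _ ≤ N * Real.exp (-(β * ρ2)) := by
          apply mul_le_mul_of_nonneg_left _ (Nat.cast_nonneg N)
          rw [← Real.exp_neg, ← Real.exp_add]
          apply Real.exp_le_exp.2
          have : sx - 1 ≤ -ρ2 := by linarith
          nlinarith
  have hR : ‖R‖ ≤ N * (2 * Real.exp (β * (sx - ρ3))) := by
    rw [hRdef]
    calc ‖∑ j ∈ (Finset.univ.erase p).erase q, f j‖
        ≤ ∑ j ∈ (Finset.univ.erase p).erase q, ‖f j‖ := norm_sum_le _ _
      _ ≤ N * (2 * Real.exp (β * (sx - ρ3))) := by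
          apply aux_sum_bound _ _ _ (by positivity)
          intro j hj
          have hjq : j ≠ q := (Finset.mem_erase.1 hj).1
          have hjp : j ≠ p := (Finset.mem_erase.1 (Finset.mem_erase.1 hj).2).1
          rw [hfdef]
          simp only []
          rw [norm_smul, Real.norm_eq_abs, Real.abs_exp]
          calc Real.exp (β * ⟪xv p, xv j⟫_ℝ) * ‖P (xv p) (xv j)‖
              ≤ Real.exp (β * (sx - ρ3)) * 2 := by
                apply mul_le_mul _ (aux_norm_P_le (hxn p).le (hxn j).le) (norm_nonneg _)
                  (Real.exp_pos _).le
                exact Real.exp_le_exp.2 (mul_le_mul_of_nonneg_left (hoth j hjp hjq) hβ)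
            _ = 2 * Real.exp (β * (sx - ρ3)) := mul_comm _ _
  have e1 : Real.exp (β * (1 - sx)) * Real.exp (β * sx) = Real.exp (β * 1) := by
    rw [← Real.exp_add]; congr 1; ring
  have hμeq : Real.exp (β * (1 - sx)) * Z⁻¹ * Real.exp (β * sx) = μ := by
    rw [hμdef, ← e1]; ring
  have halg : ∀ (a b : ℝ) (u r w : E d),
      a • (b • (Real.exp (β * sx) • u + r)) - w
        = (a * b * Real.exp (β * sx) - 1) • u + (u - w) + (a * b) • r := by
    intros a b u r w
    module
  have hdecomp : Real.exp (β * (1 - sx)) • (Z⁻¹ • ∑ j, f j) - P yp yq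
      = (μ - 1) • P (xv p) (xv q) + (P (xv p) (xv q) - P yp yq)
        + (Real.exp (β * (1 - sx)) * Z⁻¹) • R := by
    rw [hsplit, halg]
    rw [mul_assoc, ← mul_assoc, hμeq]
  rw [hdecomp]
  have hA : ‖(μ - 1) • P (xv p) (xv q)‖ ≤ 2 * N * Real.exp (-(β * ρ2)) := by
    rw [norm_smul, Real.norm_eq_abs, abs_of_nonpos (by linarith)]
    calc -(μ - 1) * ‖P (xv p) (xv q)‖ ≤ (N * Real.exp (-(β * ρ2))) * 2 := by
          apply mul_le_mul _ (aux_norm_P_le (hxn p).le (hxn q).le) (norm_nonneg _) (by positivity)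
          linarith
      _ = 2 * N * Real.exp (-(β * ρ2)) := by ring
  have hB : ‖P (xv p) (xv q) - P yp yq‖ ≤ 2 * ‖xv p - yp‖ + 2 * ‖xv q - yq‖ :=
    aux_P_lip (hxn p).le hyp1 (hxn q).le hyq1
  have hC : ‖(Real.exp (β * (1 - sx)) * Z⁻¹) • R‖ ≤ 2 * N * Real.exp (-(β * ρ3)) := by
    rw [norm_smul, Real.norm_eq_abs, abs_of_pos (by positivity)]
    calc Real.exp (β * (1 - sx)) * Z⁻¹ * ‖R‖
        ≤ Real.exp (β * (1 - sx)) * (Real.exp (β * 1))⁻¹ * (N * (2 * Real.exp (β * (sx - ρ3)))) := by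
          apply mul_le_mul _ hR (norm_nonneg _) (by positivity)
          exact mul_le_mul_of_nonneg_left hZinv (Real.exp_pos _).le
      _ = (Real.exp (β * (1 - sx)) * (Real.exp (β * 1))⁻¹ * Real.exp (β * (sx - ρ3))) * (2 * N) := by
          ring
      _ = 2 * N * Real.exp (-(β * ρ3)) := by
          rw [← Real.exp_neg, ← Real.exp_add, ← Real.exp_add]
          ring_nf
  calc ‖(μ - 1) • P (xv p) (xv q) + (P (xv p) (xv q) - P yp yq)
        + (Real.exp (β * (1 - sx)) * Z⁻¹) • R‖
      ≤ ‖(μ - 1) • P (xv p) (xv q)‖ + ‖P (xv p) (xv q) - P yp yq‖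
        + ‖(Real.exp (β * (1 - sx)) * Z⁻¹) • R‖ := norm_add₃_le
    _ ≤ 2 * N * Real.exp (-(β * ρ2)) + (2 * ‖xv p - yp‖ + 2 * ‖xv q - yq‖)
        + 2 * N * Real.exp (-(β * ρ3)) := by
        gcongr
    _ = 2 * ‖xv p - yp‖ + 2 * ‖xv q - yq‖
        + 2 * N * Real.exp (-(β * ρ2)) + 2 * N * Real.exp (-(β * ρ3)) := by ring

end Statement4Aux

set_option maxHeartbeats 4000000

/-- pairing phase: after the time rescaling `dτ = e^{β(1−⟨x_ī, x_j̄⟩)} dt`,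
the particle system with `QᵀK = V = Id` converges, as `β → ∞`, uniformly on `[0, T_ε]`,
to the limit dynamics in which only the closest pair `(ī, j̄)` moves, collapsing along
the geodesic joining the two clusters. -/
theorem statement4 (d N : ℕ) (hd : 2 ≤ d) (hN : 2 ≤ N)
    (x0 : Fin N → E d) (hx0 : ∀ i, x0 i ∈ sph d)
    (i0 j0 : Fin N) (hij : i0 ≠ j0)
    -- (ī, j̄) is the unique closest pair at initialization
    (hmax : ∀ i j, i ≠ j → ⟪x0 i, x0 j⟫_ℝ ≤ ⟪x0 i0, x0 j0⟫_ℝ)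
    (huniq : ∀ i j, i ≠ j → ⟪x0 i, x0 j⟫_ℝ = ⟪x0 i0, x0 j0⟫_ℝ →
      (i = i0 ∧ j = j0) ∨ (i = j0 ∧ j = i0))
    -- the time-rescaled solutions of the interacting particle system, for each β
    (x : ℝ → Fin N → ℝ → E d)
    (hsph : ∀ β i t, x β i t ∈ sph d)
    (hinit : ∀ β i, x β i 0 = x0 i)
    (hode : ∀ β > (0:ℝ), ∀ i (t : ℝ),
      HasDerivAt (x β i)
        (Real.exp (β * (1 - ⟪x β i0 t, x β j0 t⟫_ℝ)) •
          ((∑ j, Real.exp (β * ⟪x β i t, x β j t⟫_ℝ))⁻¹ •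
            ∑ j, Real.exp (β * ⟪x β i t, x β j t⟫_ℝ) • P (x β i t) (x β j t))) t)
    -- the limiting dynamics
    (y : Fin N → ℝ → E d)
    (hy0 : ∀ i, y i 0 = x0 i)
    (hyode1 : ∀ t : ℝ, HasDerivAt (y i0) (P (y i0 t) (y j0 t)) t)
    (hyode2 : ∀ t : ℝ, HasDerivAt (y j0) (P (y j0 t) (y i0 t)) t)
    (hyode3 : ∀ k, k ≠ i0 → k ≠ j0 → ∀ t : ℝ, HasDerivAt (y k) 0 t)
    -- the interval [0, T_ε] on which the limit pair stays ε-separated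
    (ε : ℝ) (hε : 0 < ε) (Tε : ℝ) (hTε : 0 ≤ Tε)
    (hsep : ∀ t ∈ Set.Icc (0:ℝ) Tε, ⟪y i0 t, y j0 t⟫_ℝ ≤ 1 - ε) :
    -- convergence, uniform on [0, T_ε], as β → ∞
    ∀ δ > (0:ℝ), ∃ β₀ : ℝ, ∀ β ≥ β₀, ∀ t ∈ Set.Icc (0:ℝ) Tε, ∀ i,
      ‖x β i t - y i t‖ ≤ δ := by
  classical
  intro δ hδ
  have hx0n : ∀ i, ‖x0 i‖ = 1 := fun i => mem_sphere_zero_iff_norm.1 (hx0 i)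
  have hxn : ∀ β i t, ‖x β i t‖ = 1 := fun β i t => mem_sphere_zero_iff_norm.1 (hsph β i t)
  set s0 : ℝ := ⟪x0 i0, x0 j0⟫_ℝ with hs0
  -- initial gap
  obtain ⟨η, hηpos, hηgap⟩ : ∃ η : ℝ, 0 < η ∧ ∀ i j, i ≠ j → (i, j) ≠ (i0, j0) →
      (i, j) ≠ (j0, i0) → ⟪x0 i, x0 j⟫_ℝ ≤ s0 - η := by
    set PF : Finset (Fin N × Fin N) :=
      Finset.univ.filter (fun pr => pr.1 ≠ pr.2 ∧ pr ≠ (i0, j0) ∧ pr ≠ (j0, i0)) with hPF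
    rcases Finset.eq_empty_or_nonempty PF with hPFe | hPFne
    · refine ⟨1, one_pos, fun i j h1 h2 h3 => ?_⟩
      exfalso
      have hm : (i, j) ∈ PF := by
        rw [hPF, Finset.mem_filter]
        exact ⟨Finset.mem_univ _, h1, h2, h3⟩
      rw [hPFe] at hm
      exact absurd hm (Finset.notMem_empty _)
    · refine ⟨PF.inf' hPFne (fun pr => s0 - ⟪x0 pr.1, x0 pr.2⟫_ℝ), ?_, ?_⟩
      · rw [Finset.lt_inf'_iff]
        intro pr hpr
        rw [hPF, Finset.mem_filter] at hpr
        obtain ⟨-, hne, hne1, hne2⟩ := hpr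
        have hle := hmax pr.1 pr.2 hne
        rcases eq_or_lt_of_le hle with heq | hlt
        · exfalso
          rcases huniq pr.1 pr.2 hne heq with ⟨ha, hb⟩ | ⟨ha, hb⟩
          · exact hne1 (Prod.ext ha hb)
          · exact hne2 (Prod.ext ha hb)
        · linarith
      · intro i j h1 h2 h3
        have hmem : (i, j) ∈ PF := by
          rw [hPF, Finset.mem_filter]
          exact ⟨Finset.mem_univ _, h1, h2, h3⟩
        have := Finset.inf'_le (fun pr => s0 - ⟪x0 pr.1, x0 pr.2⟫_ℝ) hmem
        linarith
  -- y stays on the sphere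
  have hyn12 := aux_pair_norm_one (T := Tε) hyode1 hyode2
    (by rw [hy0]; exact hx0n i0) (by rw [hy0]; exact hx0n j0)
  have hykconst : ∀ k, k ≠ i0 → k ≠ j0 → ∀ t, y k t = x0 k := by
    intro k h1 h2 t
    have hdiff : Differentiable ℝ (y k) := fun t => ((hyode3 k h1 h2 t).differentiableAt)
    have hfder : ∀ s : ℝ, fderiv ℝ (y k) s = 0 := by
      intro s
      have h := (hyode3 k h1 h2 s).hasFDerivAt.fderiv
      rw [h]
      ext v
      simp
    have h := is_const_of_fderiv_eq_zero hdiff hfder t 0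
    rw [h, hy0]
  have hyn : ∀ t ∈ Set.Icc (0:ℝ) Tε, ∀ i, ‖y i t‖ = 1 := by
    intro t ht i
    by_cases h1 : i = i0
    · rw [h1]; exact (hyn12 t ht).1
    by_cases h2 : i = j0
    · rw [h2]; exact (hyn12 t ht).2
    rw [hykconst i h1 h2 t]; exact hx0n i
  have hsymono : MonotoneOn (fun t => ⟪y i0 t, y j0 t⟫_ℝ) (Set.Icc (0:ℝ) Tε) :=
    aux_s_mono hyode1 hyode2 (fun t ht => (hyn12 t ht).1) (fun t ht => (hyn12 t ht).2)
  have hsy0 : ⟪y i0 0, y j0 0⟫_ℝ = s0 := by rw [hy0, hy0]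
  have hs0le : ∀ t ∈ Set.Icc (0:ℝ) Tε, s0 ≤ ⟪y i0 t, y j0 t⟫_ℝ := by
    intro t ht
    have h := hsymono (Set.left_mem_Icc.2 hTε) ht ht.1
    exact le_trans (le_of_eq hsy0.symm) h
  set ηb : ℝ := η * Real.exp (-Tε) with hηb
  have hηbpos : 0 < ηb := mul_pos hηpos (Real.exp_pos _)
  have hηbη : ηb ≤ η := by
    rw [hηb]
    nth_rewrite 2 [← mul_one η]
    apply mul_le_mul_of_nonneg_left _ hηpos.le
    rw [Real.exp_le_one_iff]
    linarith
  -- persistence of the gap along the limit dynamics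
  have hcase1 : ∀ k, k ≠ i0 → k ≠ j0 → ∀ t ∈ Set.Icc (0:ℝ) Tε,
      ⟪y i0 t, y k t⟫_ℝ ≤ ⟪y i0 t, y j0 t⟫_ℝ - ηb := by
    intro k h1 h2 t ht
    have hη0 : η ≤ ⟪y i0 0, y j0 0⟫_ℝ - ⟪y i0 0, x0 k⟫_ℝ := by
      rw [hy0, hy0]
      have := hηgap i0 k (Ne.symm h1) (by simp [Prod.ext_iff, h2]) (by simp [Prod.ext_iff, hij])
      linarith
    have hgp := aux_gap_persist hTε hηpos hyode1 hyode2
      (fun t ht => (hyn12 t ht).1) (fun t ht => (hyn12 t ht).2) (x0 k) (hx0n k) hη0 t ht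
    rw [hykconst k h1 h2 t]
    rw [hηb]
    linarith
  have hcase2 : ∀ k, k ≠ i0 → k ≠ j0 → ∀ t ∈ Set.Icc (0:ℝ) Tε,
      ⟪y j0 t, y k t⟫_ℝ ≤ ⟪y i0 t, y j0 t⟫_ℝ - ηb := by
    intro k h1 h2 t ht
    have hη0 : η ≤ ⟪y j0 0, y i0 0⟫_ℝ - ⟪y j0 0, x0 k⟫_ℝ := by
      rw [hy0, hy0]
      have hc : ⟪x0 j0, x0 i0⟫_ℝ = s0 := by rw [hs0]; exact real_inner_comm _ _
      have := hηgap j0 k (Ne.symm h2) (by simp [Prod.ext_iff, Ne.symm hij])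
        (by simp [Prod.ext_iff, h1])
      rw [hc]
      linarith
    have hgp := aux_gap_persist hTε hηpos hyode2 hyode1
      (fun t ht => (hyn12 t ht).2) (fun t ht => (hyn12 t ht).1) (x0 k) (hx0n k) hη0 t ht
    have hc2 : ⟪y j0 t, y i0 t⟫_ℝ = ⟪y i0 t, y j0 t⟫_ℝ := real_inner_comm _ _
    rw [hc2] at hgp
    rw [hykconst k h1 h2 t]
    rw [hηb]
    linarith
  have hgapy : ∀ t ∈ Set.Icc (0:ℝ) Tε, ∀ i j, i ≠ j → (i, j) ≠ (i0, j0) →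
      (i, j) ≠ (j0, i0) → ⟪y i t, y j t⟫_ℝ ≤ ⟪y i0 t, y j0 t⟫_ℝ - ηb := by
    intro t ht i j h1 h2 h3
    by_cases hi1 : i = i0
    · have hj1 : j ≠ i0 := fun hc => h1 (by rw [hi1, hc])
      have hj2 : j ≠ j0 := fun hc => h2 (by rw [hi1, hc])
      rw [hi1]
      exact hcase1 j hj1 hj2 t ht
    by_cases hi2 : i = j0
    · have hj1 : j ≠ i0 := fun hc => h3 (by rw [hi2, hc])
      have hj2 : j ≠ j0 := fun hc => h1 (by rw [hi2, hc])
      rw [hi2]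
      exact hcase2 j hj1 hj2 t ht
    by_cases hj1 : j = i0
    · have hc : ⟪y i t, y j t⟫_ℝ = ⟪y i0 t, y i t⟫_ℝ := by
        rw [hj1]; exact real_inner_comm _ _
      rw [hc]
      exact hcase1 i hi1 hi2 t ht
    by_cases hj2 : j = j0
    · have hc : ⟪y i t, y j t⟫_ℝ = ⟪y j0 t, y i t⟫_ℝ := by
        rw [hj2]; exact real_inner_comm _ _
      rw [hc]
      exact hcase2 i hi1 hi2 t ht
    · rw [hykconst i hi1 hi2 t, hykconst j hj1 hj2 t]
      have hg := hηgap i j h1 h2 h3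
      have hs := hs0le t ht
      linarith
  -- constants
  set r : ℝ := min (ηb/8) (ε/4) with hrdef
  have hrpos : 0 < r := lt_min (by positivity) (by positivity)
  set tgt : ℝ := min δ (r/2) with htgtdef
  have htgtpos : 0 < tgt := lt_min hδ (by positivity)
  set ρ : ℝ := min (ε/2) (ηb/2) with hρdef
  have hρpos : 0 < ρ := lt_min (by positivity) (by positivity)
  -- choice of β₀
  have htend : Filter.Tendsto
      (fun β : ℝ => (N:ℝ) * Real.exp (-(β*ρ)) * (Real.exp (4*Tε) - 1))
      Filter.atTop (nhds 0) := by
    have h0 : Filter.Tendsto (fun β : ℝ => β * ρ) Filter.atTop Filter.atTop :=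
      Filter.Tendsto.atTop_mul_const hρpos Filter.tendsto_id
    have h1 : Filter.Tendsto (fun β : ℝ => -(β * ρ)) Filter.atTop Filter.atBot :=
      tendsto_neg_atTop_atBot.comp h0
    have h2 : Filter.Tendsto (fun β : ℝ => Real.exp (-(β * ρ))) Filter.atTop (nhds 0) :=
      Real.tendsto_exp_atBot.comp h1
    have h3 := (h2.const_mul (N:ℝ)).mul_const (Real.exp (4*Tε) - 1)
    simpa using h3
  have hev : ∀ᶠ β in Filter.atTop,
      (N:ℝ) * Real.exp (-(β*ρ)) * (Real.exp (4*Tε) - 1) < tgt :=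
    htend.eventually_lt_const htgtpos
  obtain ⟨β₀, hβ₀⟩ := Filter.eventually_atTop.1 (hev.and (Filter.eventually_ge_atTop (1:ℝ)))
  refine ⟨β₀, ?_⟩
  intro β hββ₀ t htfin ifin
  obtain ⟨hGβ, hβ1⟩ := hβ₀ β hββ₀
  have hβpos : (0:ℝ) < β := lt_of_lt_of_le one_pos hβ1
  have hβ0 : (0:ℝ) ≤ β := hβpos.le
  -- difference function
  set F : ℝ → (Fin N → E d) := fun t i => x β i t - y i t with hFdef
  set vy : Fin N → ℝ → E d := fun i t =>
    if i = i0 then P (y i0 t) (y j0 t) else if i = j0 then P (y j0 t) (y i0 t) else 0 with hvydef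
  set Dx : Fin N → ℝ → E d := fun i t =>
    Real.exp (β * (1 - ⟪x β i0 t, x β j0 t⟫_ℝ)) •
      ((∑ j, Real.exp (β * ⟪x β i t, x β j t⟫_ℝ))⁻¹ •
        ∑ j, Real.exp (β * ⟪x β i t, x β j t⟫_ℝ) • P (x β i t) (x β j t)) with hDxdef
  have hvyi0 : ∀ t, vy i0 t = P (y i0 t) (y j0 t) := by
    intro t; rw [hvydef]; simp
  have hvyj0 : ∀ t, vy j0 t = P (y j0 t) (y i0 t) := by
    intro t; rw [hvydef]; simp [Ne.symm hij]
  have hvyk : ∀ k, k ≠ i0 → k ≠ j0 → ∀ t, vy k t = 0 := by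
    intro k h1 h2 t; rw [hvydef]; simp [h1, h2]
  have hyd : ∀ i t, HasDerivAt (y i) (vy i t) t := by
    intro i t
    by_cases h1 : i = i0
    · rw [h1, hvyi0]; exact hyode1 t
    by_cases h2 : i = j0
    · rw [h2, hvyj0]; exact hyode2 t
    · rw [hvyk i h1 h2]; exact hyode3 i h1 h2 t
  have hFd : ∀ t, HasDerivAt F (fun i => Dx i t - vy i t) t := by
    intro t
    apply hasDerivAt_pi.2
    intro i
    exact (hode β hβpos i t).sub (hyd i t)
  have hFcont : Continuous F := continuous_iff_continuousAt.2 fun t => (hFd t).continuousAt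
  have hF0 : F 0 = 0 := by
    funext i
    show x β i 0 - y i 0 = 0
    rw [hinit, hy0, sub_self]
  -- the key derivative estimate
  have key : ∀ t ∈ Set.Icc (0:ℝ) Tε, ‖F t‖ ≤ r →
      ∀ i, ‖Dx i t - vy i t‖ ≤ 4 * ‖F t‖ + 4 * N * Real.exp (-(β * ρ)) := by
    intro t ht hFr i
    have hdiffF : ∀ j, ‖x β j t - y j t‖ ≤ ‖F t‖ := fun j => norm_le_pi_norm (F t) j
    have hdiff : ∀ j, ‖x β j t - y j t‖ ≤ r := fun j => le_trans (hdiffF j) hFr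
    have hinner : ∀ a b : Fin N, |⟪x β a t, x β b t⟫_ℝ - ⟪y a t, y b t⟫_ℝ| ≤ 2*r := by
      intro a b
      have h := aux_inner_diff_le (x := x β a t) (y := x β b t) (x' := y a t) (y' := y b t)
        (le_of_eq (hyn t ht a)) (le_of_eq (hxn β b t))
      have h1 := hdiff a; have h2 := hdiff b
      linarith
    have hsy := hsep t ht
    have hre : r ≤ ε/4 := min_le_right _ _
    have hrb : r ≤ ηb/8 := min_le_left _ _
    have hsx1 : ⟪x β i0 t, x β j0 t⟫_ℝ ≤ 1 - ε/2 := by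
      have h1 := abs_le.1 (hinner i0 j0)
      linarith
    have hothx : ∀ a b : Fin N, a ≠ b → (a, b) ≠ (i0, j0) → (a, b) ≠ (j0, i0) →
        ⟪x β a t, x β b t⟫_ℝ ≤ ⟪x β i0 t, x β j0 t⟫_ℝ - ηb/2 := by
      intro a b h1 h2 h3
      have hy1 := hgapy t ht a b h1 h2 h3
      have ha := abs_le.1 (hinner a b)
      have hb := abs_le.1 (hinner i0 j0)
      linarith
    have hρ1 : ρ ≤ ε/2 := min_le_left _ _
    have hρ2 : ρ ≤ ηb/2 := min_le_right _ _
    have hexp1 : Real.exp (-(β * (ε/2))) ≤ Real.exp (-(β * ρ)) := by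
      apply Real.exp_le_exp.2
      nlinarith
    have hexp2 : Real.exp (-(β * (ηb/2))) ≤ Real.exp (-(β * ρ)) := by
      apply Real.exp_le_exp.2
      nlinarith
    have hN0 : (0:ℝ) ≤ (N:ℝ) := Nat.cast_nonneg N
    have hFt0 : (0:ℝ) ≤ ‖F t‖ := norm_nonneg _
    by_cases h1 : i = i0
    · rw [h1]
      have hpe := aux_pair_est (N := N) (d := d) (β := β) (ρ2 := ε/2) (ρ3 := ηb/2)
        hβ0 (by positivity) (by positivity)
        (xv := fun j => x β j t) (yp := y i0 t) (yq := y j0 t) (p := i0) (q := j0) hij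
        (fun j => hxn β j t) (le_of_eq (hyn t ht i0)) (le_of_eq (hyn t ht j0))
        hsx1
        (fun j hj1 hj2 => hothx i0 j (Ne.symm hj1)
          (by simp [Prod.ext_iff, hj2]) (by simp [Prod.ext_iff, hij]))
      rw [hvyi0]
      refine le_trans hpe ?_
      have e1 := hdiffF i0; have e2 := hdiffF j0
      have hq1 : 2*(N:ℝ)*Real.exp (-(β*(ε/2))) ≤ 2*N*Real.exp (-(β*ρ)) := by
        apply mul_le_mul_of_nonneg_left hexp1 (by positivity)
      have hq2 : 2*(N:ℝ)*Real.exp (-(β*(ηb/2))) ≤ 2*N*Real.exp (-(β*ρ)) := by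
        apply mul_le_mul_of_nonneg_left hexp2 (by positivity)
      linarith
    by_cases h2 : i = j0
    · rw [h2]
      have hswap : ⟪x β i0 t, x β j0 t⟫_ℝ = ⟪x β j0 t, x β i0 t⟫_ℝ := real_inner_comm _ _
      have hpe := aux_pair_est (N := N) (d := d) (β := β) (ρ2 := ε/2) (ρ3 := ηb/2)
        hβ0 (by positivity) (by positivity)
        (xv := fun j => x β j t) (yp := y j0 t) (yq := y i0 t) (p := j0) (q := i0)
        (Ne.symm hij)
        (fun j => hxn β j t) (le_of_eq (hyn t ht j0)) (le_of_eq (hyn t ht i0))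
        (by rw [← hswap]; exact hsx1)
        (fun j hj1 hj2 => by
          rw [← hswap]
          exact hothx j0 j (Ne.symm hj1)
            (by simp [Prod.ext_iff, Ne.symm hij]) (by simp [Prod.ext_iff, hj2]))
      rw [hvyj0]
      have hDeq : Dx j0 t = Real.exp (β * (1 - ⟪x β j0 t, x β i0 t⟫_ℝ)) •
          ((∑ j, Real.exp (β * ⟪x β j0 t, x β j t⟫_ℝ))⁻¹ •
            ∑ j, Real.exp (β * ⟪x β j0 t, x β j t⟫_ℝ) • P (x β j0 t) (x β j t)) := by
        rw [hDxdef, ← hswap]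
      rw [hDeq]
      refine le_trans hpe ?_
      have e1 := hdiffF j0; have e2 := hdiffF i0
      have hq1 : 2*(N:ℝ)*Real.exp (-(β*(ε/2))) ≤ 2*N*Real.exp (-(β*ρ)) := by
        apply mul_le_mul_of_nonneg_left hexp1 (by positivity)
      have hq2 : 2*(N:ℝ)*Real.exp (-(β*(ηb/2))) ≤ 2*N*Real.exp (-(β*ρ)) := by
        apply mul_le_mul_of_nonneg_left hexp2 (by positivity)
      linarith
    · rw [hvyk i h1 h2, sub_zero]
      have hfe := aux_far_est (N := N) (d := d) (β := β) (ρ3 := ηb/2)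
        (sx := ⟪x β i0 t, x β j0 t⟫_ℝ) hβ0
        (xv := fun j => x β j t) (k := i) (fun j => hxn β j t)
        (fun j hj => hothx i j (Ne.symm hj)
          (by simp [Prod.ext_iff, h1]) (by simp [Prod.ext_iff, h2]))
      refine le_trans hfe ?_
      have hq2 : 2*(N:ℝ)*Real.exp (-(β*(ηb/2))) ≤ 2*N*Real.exp (-(β*ρ)) := by
        apply mul_le_mul_of_nonneg_left hexp2 (by positivity)
      have hq3 : (0:ℝ) ≤ 2*N*Real.exp (-(β*ρ)) := by positivity
      linarith [hq2, hq3, hFt0]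
  -- Gronwall on any sub-interval where the bootstrap bound holds
  have hgb : ∀ T' ∈ Set.Icc (0:ℝ) Tε, (∀ t ∈ Set.Icc (0:ℝ) T', ‖F t‖ ≤ r) →
      ∀ t ∈ Set.Icc (0:ℝ) T', ‖F t‖ ≤ tgt := by
    intro T' hT' hsmall
    have hb := norm_le_gronwallBound_of_norm_deriv_right_le (f := F)
      (f' := fun t => fun i => Dx i t - vy i t) (δ := 0) (K := 4)
      (ε := 4 * N * Real.exp (-(β * ρ))) (a := 0) (b := T')
      hFcont.continuousOn (fun t _ => (hFd t).hasDerivWithinAt)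
      (by rw [hF0, norm_zero])
      (by
        intro τ hτI
        have hτIcc : τ ∈ Set.Icc (0:ℝ) T' := Set.Ico_subset_Icc_self hτI
        have hτ2 : τ ∈ Set.Icc (0:ℝ) Tε := ⟨hτIcc.1, hτIcc.2.trans hT'.2⟩
        have hk := key τ hτ2 (hsmall τ hτIcc)
        rw [pi_norm_le_iff_of_nonneg (by positivity)]
        intro i
        exact hk i)
    intro τ hτI
    have hτb := hb τ hτI
    have hKne : (4:ℝ) ≠ 0 := by norm_num
    rw [gronwallBound_of_K_ne_0 hKne] at hτb
    have hexpt : Real.exp (4*(τ-0)) ≤ Real.exp (4*Tε) := by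
      apply Real.exp_le_exp.2
      have h2 := hτI.2.trans hT'.2
      linarith
    have hf1 : (0:ℝ) ≤ 4*N*Real.exp (-(β*ρ))/4 := by positivity
    have hfin2 : ‖F τ‖ ≤ (N:ℝ) * Real.exp (-(β*ρ)) * (Real.exp (4*Tε) - 1) := by
      have hstep : 4*(N:ℝ)*Real.exp (-(β*ρ))/4 * (Real.exp (4*(τ-0)) - 1)
          ≤ 4*N*Real.exp (-(β*ρ))/4 * (Real.exp (4*Tε) - 1) := by
        apply mul_le_mul_of_nonneg_left _ hf1
        linarith
      calc ‖F τ‖ ≤ 0 * Real.exp (4*(τ-0))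
            + 4*N*Real.exp (-(β*ρ))/4 * (Real.exp (4*(τ-0)) - 1) := hτb
        _ ≤ 0 + 4*N*Real.exp (-(β*ρ))/4 * (Real.exp (4*Tε) - 1) := by
            rw [zero_mul]
            linarith
        _ = (N:ℝ) * Real.exp (-(β*ρ)) * (Real.exp (4*Tε) - 1) := by ring
    exact hfin2.trans hGβ.le
  -- bootstrap
  set S : Set ℝ := {T' | T' ∈ Set.Icc (0:ℝ) Tε ∧ ∀ τ ∈ Set.Icc (0:ℝ) T', ‖F τ‖ ≤ r} with hSdef
  have h0S : (0:ℝ) ∈ S := by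
    constructor
    · exact ⟨le_refl 0, hTε⟩
    · intro τ hτ
      have hτ0 : τ = 0 := le_antisymm hτ.2 hτ.1
      rw [hτ0, hF0, norm_zero]
      exact hrpos.le
  have hbdd : BddAbove S := ⟨Tε, fun T' hT' => hT'.1.2⟩
  have hSne : S.Nonempty := ⟨0, h0S⟩
  have hTs0 : 0 ≤ sSup S := le_csSup hbdd h0S
  have hTsTε : sSup S ≤ Tε := csSup_le hSne (fun b hb => hb.1.2)
  have claim1 : ∀ τ ∈ Set.Icc (0:ℝ) (sSup S), ‖F τ‖ ≤ r := by
    intro τ hτ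
    rcases eq_or_lt_of_le hτ.2 with heq | hlt
    · rcases eq_or_lt_of_le hTs0 with hTs0' | hTs0'
      · have hτ0 : τ = 0 := by rw [heq, ← hTs0']
        rw [hτ0, hF0, norm_zero]
        exact hrpos.le
      · have hTs0'' : 0 < sSup S := hTs0'
        rw [heq]
        have htd : Filter.Tendsto (fun σ => ‖F σ‖)
            (nhdsWithin (sSup S) (Set.Iio (sSup S))) (nhds ‖F (sSup S)‖) :=
          (hFcont.norm.continuousAt).mono_left nhdsWithin_le_nhds
        apply le_of_tendsto htd
        have hmen : Set.Ioo (0:ℝ) (sSup S) ∈ nhdsWithin (sSup S) (Set.Iio (sSup S)) :=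
          Ioo_mem_nhdsLT_of_mem ⟨hTs0'', le_refl _⟩
        filter_upwards [hmen] with σ hσ
        obtain ⟨b, hbS, hσb⟩ := exists_lt_of_lt_csSup hSne hσ.2
        exact hbS.2 σ ⟨hσ.1.le, hσb.le⟩
    · obtain ⟨b, hbS, hτb⟩ := exists_lt_of_lt_csSup hSne hlt
      exact hbS.2 τ ⟨hτ.1, hτb.le⟩
  have hTseq : sSup S = Tε := by
    by_contra hne
    have hlt : sSup S < Tε := lt_of_le_of_ne hTsTε hne
    have hFTs : ‖F (sSup S)‖ ≤ tgt :=
      hgb (sSup S) ⟨hTs0, hTsTε⟩ claim1 (sSup S) ⟨hTs0, le_refl _⟩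
    have hFTsr : ‖F (sSup S)‖ < r := by
      have h2 : tgt ≤ r/2 := min_le_right _ _
      linarith
    have hev2 : ∀ᶠ σ in nhds (sSup S), ‖F σ‖ < r :=
      Filter.Tendsto.eventually_lt_const hFTsr (hFcont.norm.continuousAt)
    obtain ⟨dd, hdd, hball⟩ := Metric.eventually_nhds_iff.1 hev2
    set θ := min (sSup S + dd/2) Tε with hθdef
    have hθS : θ ∈ S := by
      constructor
      · constructor
        · apply le_min
          · linarith
          · exact hTε
        · exact min_le_right _ _
      · intro τ hτ
        rcases le_or_gt τ (sSup S) with hc | hc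
        · exact claim1 τ ⟨hτ.1, hc⟩
        · apply (hball ?_).le
          rw [Real.dist_eq, abs_of_pos (by linarith)]
          have h3 : τ ≤ sSup S + dd/2 := le_trans hτ.2 (min_le_left _ _)
          linarith
    have hθle : θ ≤ sSup S := le_csSup hbdd hθS
    have hθgt : sSup S < θ := lt_min (by linarith) hlt
    linarith
  -- conclusion
  rw [hTseq] at claim1
  have hfin := hgb Tε ⟨hTε, le_refl _⟩ claim1 t htfin
  have h1 : ‖x β ifin t - y ifin t‖ ≤ ‖F t‖ := norm_le_pi_norm (F t) ifin
  have h2 : tgt ≤ δ := min_le_left _ _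
  linarith

end Paper
end
end

section
/- Let d ≥ 5 and let x ∈ ℝ^d be a unit vector. (i) If T is a bilinear form (2-tensor) on ℝ^d that is symmetric (invariant under permutation of its indices) and satisfies T(Ru, Rv) = T(u,v) for every rotation R ∈ SO(d) with Rx = x, then there exist α, β ∈ ℝ such that T = α (x ⊗ x) + β Id, i.e., T(u,v) = α⟨x,u⟩⟨x,v⟩ + β⟨u,v⟩. (ii) If T is a trilinear form (3-tensor) on ℝ^d invariant under permutations of its indices and satisfying T(Ru, Rv, Rw) = T(u,v,w) for every rotation R ∈ SO(d) with Rx = x, then there exist α, β ∈ ℝ such that T = α (x ⊗ x ⊗ x) + β Sym(x ⊗ Id), where Sym(x ⊗ Id)_{ijk} = x_i δ_{jk} + x_j δ_{ik} + x_k δ_{ij}. -/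
open MeasureTheory Filter Topology Matrix
open scoped InnerProductSpace ENNReal NNReal

noncomputable section
namespace Paper

lemma rot_exists {d : ℕ} (hd : 0 < d) (b : OrthonormalBasis (Fin d) ℝ (E d))
    (π : Equiv.Perm (Fin d)) (σ : Fin d → ℝ) (hσ : ∀ m, σ m = 1 ∨ σ m = -1)
    (hdet : (Equiv.Perm.sign π : ℝ) * ∏ m, σ m = 1) :
    ∃ R : E d ≃ₗᵢ[ℝ] E d,
      LinearMap.det (R.toLinearEquiv : E d →ₗ[ℝ] E d) = 1 ∧ ∀ m, R (b m) = σ m • b (π m) := by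
  classical
  have : Nonempty (Fin d) := ⟨⟨0, hd⟩⟩
  have hσ1 : ∀ m, σ m * σ m = 1 := fun m => by rcases hσ m with h | h <;> rw [h] <;> norm_num
  set c : Fin d → E d := fun m => σ m • b (π m) with hc
  have hon : Orthonormal ℝ c := by
    rw [orthonormal_iff_ite]
    intro i j
    have hb := orthonormal_iff_ite.mp b.orthonormal (π i) (π j)
    simp only [hc, real_inner_smul_left, real_inner_smul_right, hb]
    by_cases h : i = j
    · simp [h, hσ1]
    · have : ¬ (π i = π j) := fun hh => h (π.injective hh)
      simp [h, this]
  have hcard : Fintype.card (Fin d) = Module.finrank ℝ (E d) := by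
    simp [finrank_euclideanSpace_fin]
  let B : Module.Basis (Fin d) ℝ (E d) :=
    basisOfLinearIndependentOfCardEqFinrank hon.linearIndependent hcard
  have hB : ⇑B = c := coe_basisOfLinearIndependentOfCardEqFinrank _ _
  have honB : Orthonormal ℝ ⇑B := by rw [hB]; exact hon
  have honb : Orthonormal ℝ ⇑b.toBasis := by rw [b.coe_toBasis]; exact b.orthonormal
  refine ⟨honb.equiv honB (Equiv.refl _), ?_, ?_⟩
  · rw [← LinearMap.det_toMatrix b.toBasis]
    have hmat : LinearMap.toMatrix b.toBasis b.toBasis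
        ((honb.equiv honB (Equiv.refl _)).toLinearEquiv : E d →ₗ[ℝ] E d)
        = (π⁻¹.permMatrix ℝ) * Matrix.diagonal σ := by
      ext i j
      rw [LinearMap.toMatrix_apply]
      have h1 : (honb.equiv honB (Equiv.refl _)) (b.toBasis j) = σ j • b (π j) := by
        have := honb.equiv_apply honB (Equiv.refl _) j
        rw [this, Equiv.refl_apply, hB]
      rw [LinearEquiv.coe_coe]
      change b.toBasis.repr ((honb.equiv honB (Equiv.refl _)) (b.toBasis j)) i = _
      rw [h1, _root_.map_smul, Finsupp.smul_apply]
      have h2 : b.toBasis.repr (b (π j)) i = if π j = i then 1 else 0 := by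
        rw [← b.coe_toBasis, b.toBasis.repr_self, Finsupp.single_apply]
      rw [h2, Matrix.mul_diagonal]
      have h5 : Equiv.Perm.permMatrix ℝ π⁻¹ i j = if π⁻¹ i = j then 1 else 0 := by
        simp [Equiv.Perm.permMatrix, PEquiv.toMatrix_apply, Equiv.toPEquiv_apply, eq_comm]
      rw [h5]
      by_cases h : π j = i
      · have h6 : π⁻¹ i = j := by rw [← h]; simp
        simp [h, h6, smul_eq_mul]
      · have h6 : ¬ π⁻¹ i = j := fun hh => h (by rw [← hh]; simp)
        simp [h, h6, smul_eq_mul]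
        exact fun hh => absurd hh h6
    rw [hmat, Matrix.det_mul, Matrix.det_permutation, Matrix.det_diagonal,
      Equiv.Perm.sign_inv]
    simpa using hdet
  · intro m
    have := honb.equiv_apply honB (Equiv.refl _) m
    rw [b.coe_toBasis] at this
    rw [this, Equiv.refl_apply, hB]


lemma exists_flip {d : ℕ} (hd : 0 < d) (b : OrthonormalBasis (Fin d) ℝ (E d))
    (z p q : Fin d) (hp : p ≠ z) (hq : q ≠ z) (hpq : p ≠ q) :
    ∃ R : E d ≃ₗᵢ[ℝ] E d,
      LinearMap.det (R.toLinearEquiv : E d →ₗ[ℝ] E d) = 1 ∧ R (b z) = b z ∧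
      ∀ m, R (b m) = (if m = p ∨ m = q then (-1:ℝ) else 1) • b m := by
  classical
  set σ : Fin d → ℝ := fun m => if m = p ∨ m = q then (-1:ℝ) else 1 with hσdef
  have hσ : ∀ m, σ m = 1 ∨ σ m = -1 := by
    intro m; by_cases h : m = p ∨ m = q <;> simp [hσdef, h]
  have hprod : ∏ m, σ m = 1 := by
    have hfac : ∀ m, σ m = (if m = p then (-1:ℝ) else 1) * (if m = q then -1 else 1) := by
      intro m
      by_cases h1 : m = p <;> by_cases h2 : m = q
      · exact absurd (h1 ▸ h2) hpq
      · simp [hσdef, h1, h2, hpq]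
      · simp [hσdef, h1, h2, Ne.symm hpq]
      · simp [hσdef, h1, h2]
    rw [Finset.prod_congr rfl fun m _ => hfac m, Finset.prod_mul_distrib,
      Finset.prod_ite_eq' Finset.univ p (fun _ => (-1:ℝ)),
      Finset.prod_ite_eq' Finset.univ q (fun _ => (-1:ℝ))]
    norm_num
  obtain ⟨R, hdet, hR⟩ := rot_exists hd b 1 σ hσ (by simp [hprod])
  refine ⟨R, hdet, ?_, ?_⟩
  · have h0 := hR z
    simp only [Equiv.Perm.coe_one, id] at h0
    rw [h0]
    have hz : σ z = 1 := by
      have h1 : ¬ (z = p ∨ z = q) := by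
        rintro (h | h)
        exacts [hp h.symm, hq h.symm]
      simp [hσdef, h1]
    simp [hz]
  · intro m
    have := hR m
    simp only [Equiv.Perm.coe_one, id] at this
    exact this


lemma exists_swapflip {d : ℕ} (hd : 0 < d) (b : OrthonormalBasis (Fin d) ℝ (E d))
    (z p q r : Fin d) (hp : p ≠ z) (hq : q ≠ z) (hr : r ≠ z)
    (hpq : p ≠ q) (hrp : r ≠ p) (hrq : r ≠ q) :
    ∃ R : E d ≃ₗᵢ[ℝ] E d,
      LinearMap.det (R.toLinearEquiv : E d →ₗ[ℝ] E d) = 1 ∧ R (b z) = b z ∧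
      R (b p) = b q ∧ R (b q) = b p := by
  classical
  set σ : Fin d → ℝ := fun m => if m = r then (-1:ℝ) else 1 with hσdef
  have hσ : ∀ m, σ m = 1 ∨ σ m = -1 := by
    intro m; by_cases h : m = r <;> simp [hσdef, h]
  have hprod : ∏ m, σ m = -1 := by
    rw [hσdef, Finset.prod_ite_eq' Finset.univ r (fun _ => (-1:ℝ))]
    simp
  obtain ⟨R, hdet, hR⟩ := rot_exists hd b (Equiv.swap p q) σ hσ
    (by rw [hprod, Equiv.Perm.sign_swap hpq]; norm_num)
  refine ⟨R, hdet, ?_, ?_, ?_⟩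
  · rw [hR z, Equiv.swap_apply_of_ne_of_ne (Ne.symm hp) (Ne.symm hq)]
    have hz : σ z = 1 := by simp [hσdef, Ne.symm hr]
    simp [hz]
  · rw [hR p, Equiv.swap_apply_left]
    have hzp : σ p = 1 := by simp [hσdef, Ne.symm hrp]
    simp [hzp]
  · rw [hR q, Equiv.swap_apply_right]
    have hzq : σ q = 1 := by simp [hσdef, Ne.symm hrq]
    simp [hzq]


lemma card_le2 {α : Type*} [DecidableEq α] (a b : α) : ({a, b} : Finset α).card ≤ 2 := by
  have h1 := Finset.card_insert_le a ({b} : Finset α)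
  have h2 : ({b} : Finset α).card = 1 := Finset.card_singleton b
  omega

lemma card_le3 {α : Type*} [DecidableEq α] (a b c : α) : ({a, b, c} : Finset α).card ≤ 3 := by
  have h1 := Finset.card_insert_le a ({b, c} : Finset α)
  have h2 := card_le2 b c
  omega

lemma card_le4 {α : Type*} [DecidableEq α] (a b c e : α) : ({a, b, c, e} : Finset α).card ≤ 4 := by
  have h1 := Finset.card_insert_le a ({b, c, e} : Finset α)
  have h2 := card_le3 b c e
  omega

set_option maxHeartbeats 1600000 in
/-- a symmetric 2-tensor (resp. 3-tensor) on `ℝ^d`, `d ≥ 5`, invariant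
under all rotations fixing a unit vector `x`, is of the form `α x⊗x + β Id`
(resp. `α x⊗x⊗x + β Sym(x ⊗ Id)`). -/
theorem statement19 (d : ℕ) (hd : 5 ≤ d) (x : E d) (hx : ‖x‖ = 1)
    (T₂ : E d →ₗ[ℝ] E d →ₗ[ℝ] ℝ) (T₃ : E d →ₗ[ℝ] E d →ₗ[ℝ] E d →ₗ[ℝ] ℝ)
    -- permutation invariance (symmetry) of the tensors
    (hsym₂ : ∀ u v, T₂ u v = T₂ v u)
    (hsym₃ : (∀ u v w, T₃ u v w = T₃ v u w) ∧ ∀ u v w, T₃ u v w = T₃ u w v)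
    -- invariance under rotations fixing x
    (hrot₂ : ∀ R : E d ≃ₗᵢ[ℝ] E d,
      LinearMap.det (R.toLinearEquiv : E d →ₗ[ℝ] E d) = 1 → R x = x →
      ∀ u v, T₂ (R u) (R v) = T₂ u v)
    (hrot₃ : ∀ R : E d ≃ₗᵢ[ℝ] E d,
      LinearMap.det (R.toLinearEquiv : E d →ₗ[ℝ] E d) = 1 → R x = x →
      ∀ u v w, T₃ (R u) (R v) (R w) = T₃ u v w) :
    (∃ α β : ℝ, ∀ u v, T₂ u v = α * (⟪x, u⟫_ℝ * ⟪x, v⟫_ℝ) + β * ⟪u, v⟫_ℝ) ∧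
    (∃ α β : ℝ, ∀ u v w, T₃ u v w =
      α * (⟪x, u⟫_ℝ * ⟪x, v⟫_ℝ * ⟪x, w⟫_ℝ) +
        β * (⟪x, u⟫_ℝ * ⟪v, w⟫_ℝ + ⟪x, v⟫_ℝ * ⟪u, w⟫_ℝ + ⟪x, w⟫_ℝ * ⟪u, v⟫_ℝ)) := by
  classical
  have hd0 : 0 < d := by omega
  haveI : NeZero d := ⟨by omega⟩
  -- an orthonormal basis whose 0-th vector is x
  obtain ⟨b, hb⟩ : ∃ b : OrthonormalBasis (Fin d) ℝ (E d),
      ∀ i ∈ ({0} : Set (Fin d)), b i = x := by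
    apply Orthonormal.exists_orthonormalBasis_extension_of_card_eq
      (v := fun _ : Fin d => x) (s := ({0} : Set (Fin d)))
    · simp [finrank_euclideanSpace_fin]
    · constructor
      · intro i; simpa using hx
      · intro i j hij
        exact absurd (Subtype.ext ((Set.mem_singleton_iff.mp i.2).trans
          (Set.mem_singleton_iff.mp j.2).symm)) hij
  have hb0 : b 0 = x := hb 0 rfl
  have pick : ∀ S : Finset (Fin d), S.card ≤ 4 → ∃ k, k ∉ S := by
    intro S hS
    by_contra h
    push_neg at h
    have h2 : (Finset.univ : Finset (Fin d)).card ≤ S.card :=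
      Finset.card_le_card fun y _ => h y
    rw [Finset.card_univ, Fintype.card_fin] at h2
    omega
  set one : Fin d := ⟨1, by omega⟩ with hone_def
  have hone : one ≠ 0 := by simp [hone_def, Fin.ext_iff]
  set t : Fin d → Fin d → ℝ := fun i j => T₂ (b i) (b j) with ht_def
  set s3 : Fin d → Fin d → Fin d → ℝ := fun i j k => T₃ (b i) (b j) (b k) with hs3_def
  -- sign-flip consequences
  have flipt : ∀ p q, p ≠ 0 → q ≠ 0 → p ≠ q → ∀ i j,
      t i j = ((if i = p ∨ i = q then (-1:ℝ) else 1) *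
        (if j = p ∨ j = q then (-1:ℝ) else 1)) * t i j := by
    intro p q hp hq hpq i j
    obtain ⟨R, hdet, hR0, hR⟩ := exists_flip hd0 b 0 p q hp hq hpq
    have hx' : R x = x := by rw [← hb0, hR0]
    have h := hrot₂ R hdet hx' (b i) (b j)
    rw [hR i, hR j] at h
    simp only [_root_.map_smul, LinearMap.smul_apply, smul_eq_mul] at h
    simp only [ht_def]
    linear_combination -h
  have flips3 : ∀ p q, p ≠ 0 → q ≠ 0 → p ≠ q → ∀ i j k,
      s3 i j k = ((if i = p ∨ i = q then (-1:ℝ) else 1) *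
        (if j = p ∨ j = q then (-1:ℝ) else 1) *
        (if k = p ∨ k = q then (-1:ℝ) else 1)) * s3 i j k := by
    intro p q hp hq hpq i j k
    obtain ⟨R, hdet, hR0, hR⟩ := exists_flip hd0 b 0 p q hp hq hpq
    have hx' : R x = x := by rw [← hb0, hR0]
    have h := hrot₃ R hdet hx' (b i) (b j) (b k)
    rw [hR i, hR j, hR k] at h
    simp only [_root_.map_smul, LinearMap.smul_apply, smul_eq_mul] at h
    simp only [hs3_def]
    linear_combination -h
  have vanish2 : ∀ p q i j, p ≠ 0 → q ≠ 0 → p ≠ q →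
      (if i = p ∨ i = q then (-1:ℝ) else 1) *
        (if j = p ∨ j = q then (-1:ℝ) else 1) = -1 → t i j = 0 := by
    intro p q i j hp hq hpq hsign
    have h := flipt p q hp hq hpq i j
    rw [hsign] at h
    linarith
  have vanish3 : ∀ p q i j k, p ≠ 0 → q ≠ 0 → p ≠ q →
      (if i = p ∨ i = q then (-1:ℝ) else 1) *
        (if j = p ∨ j = q then (-1:ℝ) else 1) *
        (if k = p ∨ k = q then (-1:ℝ) else 1) = -1 → s3 i j k = 0 := by
    intro p q i j k hp hq hpq hsign
    have h := flips3 p q hp hq hpq i j k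
    rw [hsign] at h
    linarith
  -- swap consequences
  have swapt : ∀ p q, p ≠ 0 → q ≠ 0 → p ≠ q → t p p = t q q := by
    intro p q hp hq hpq
    obtain ⟨r, hr⟩ := pick {0, p, q} ((card_le3 _ _ _).trans (by omega))
    simp only [Finset.mem_insert, Finset.mem_singleton, not_or] at hr
    obtain ⟨hr0, hrp, hrq⟩ := hr
    obtain ⟨R, hdet, hR0, hRp, hRq⟩ := exists_swapflip hd0 b 0 p q r hp hq hr0 hpq hrp hrq
    have hx' : R x = x := by rw [← hb0, hR0]
    have h := hrot₂ R hdet hx' (b p) (b p)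
    rw [hRp] at h
    exact h.symm
  have swaps3 : ∀ p q, p ≠ 0 → q ≠ 0 → p ≠ q → s3 0 p p = s3 0 q q := by
    intro p q hp hq hpq
    obtain ⟨r, hr⟩ := pick {0, p, q} ((card_le3 _ _ _).trans (by omega))
    simp only [Finset.mem_insert, Finset.mem_singleton, not_or] at hr
    obtain ⟨hr0, hrp, hrq⟩ := hr
    obtain ⟨R, hdet, hR0, hRp, hRq⟩ := exists_swapflip hd0 b 0 p q r hp hq hr0 hpq hrp hrq
    have hx' : R x = x := by rw [← hb0, hR0]
    have h := hrot₃ R hdet hx' (b 0) (b p) (b p)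
    rw [hRp, hR0] at h
    exact h.symm
  -- T₂ component facts
  have ht0 : ∀ i, i ≠ 0 → t 0 i = 0 := by
    intro i hi
    obtain ⟨q, hq⟩ := pick {0, i} ((card_le2 _ _).trans (by omega))
    simp only [Finset.mem_insert, Finset.mem_singleton, not_or] at hq
    obtain ⟨hq0, hqi⟩ := hq
    refine vanish2 i q (0:Fin d) i hi hq0 (Ne.symm hqi) ?_
    rw [if_neg (by rintro (h | h); exacts [hi h.symm, hq0 h.symm]),
      if_pos (Or.inl rfl)]
    ring
  have htd : ∀ i j, i ≠ 0 → j ≠ 0 → i ≠ j → t i j = 0 := by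
    intro i j hi hj hij
    obtain ⟨q, hq⟩ := pick {0, i, j} ((card_le3 _ _ _).trans (by omega))
    simp only [Finset.mem_insert, Finset.mem_singleton, not_or] at hq
    obtain ⟨hq0, hqi, hqj⟩ := hq
    refine vanish2 i q i j hi hq0 (Ne.symm hqi) ?_
    rw [if_pos (Or.inl rfl),
      if_neg (by rintro (h | h); exacts [hij h.symm, hqj h.symm])]
    ring
  have htsame : ∀ i, i ≠ 0 → t i i = t one one := by
    intro i hi
    by_cases h : i = one
    · rw [h]
    · exact swapt i one hi hone h
  have hpt2 : ∀ i j, t i j =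
      (t 0 0 - t one one) * ((if i = 0 then (1:ℝ) else 0) * (if j = 0 then (1:ℝ) else 0))
        + t one one * (if i = j then (1:ℝ) else 0) := by
    intro i j
    by_cases hi : i = 0 <;> by_cases hj : j = 0
    · subst hi; subst hj; simp
    · subst hi
      rw [ht0 j hj]
      simp [hj, (Ne.symm hj : (0:Fin d) ≠ j)]
    · subst hj
      have h : t i 0 = t 0 i := hsym₂ (b i) (b 0)
      rw [h, ht0 i hi]
      simp [hi]
    · by_cases hij : i = j
      · subst hij
        rw [htsame i hi]
        simp [hi]
      · rw [htd i j hi hj hij]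
        simp [hi, hj, hij]
  -- T₃ component facts
  have hsA3 : ∀ i j k, s3 i j k = s3 j i k := fun i j k => hsym₃.1 (b i) (b j) (b k)
  have hsB3 : ∀ i j k, s3 i j k = s3 i k j := fun i j k => hsym₃.2 (b i) (b j) (b k)
  have hs00 : ∀ k, k ≠ 0 → s3 0 0 k = 0 := by
    intro k hk
    obtain ⟨q, hq⟩ := pick {0, k} ((card_le2 _ _).trans (by omega))
    simp only [Finset.mem_insert, Finset.mem_singleton, not_or] at hq
    obtain ⟨hq0, hqk⟩ := hq
    refine vanish3 k q (0:Fin d) (0:Fin d) k hk hq0 (Ne.symm hqk) ?_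
    rw [if_neg (by rintro (h | h); exacts [hk h.symm, hq0 h.symm]),
      if_pos (Or.inl rfl)]
    ring
  have hsoffd : ∀ j k, j ≠ 0 → k ≠ 0 → j ≠ k → s3 0 j k = 0 := by
    intro j k hj hk hjk
    obtain ⟨q, hq⟩ := pick {0, j, k} ((card_le3 _ _ _).trans (by omega))
    simp only [Finset.mem_insert, Finset.mem_singleton, not_or] at hq
    obtain ⟨hq0, hqj, hqk⟩ := hq
    refine vanish3 j q (0:Fin d) j k hj hq0 (Ne.symm hqj) ?_
    rw [if_neg (by rintro (h | h); exacts [hj h.symm, hq0 h.symm]),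
      if_pos (Or.inl rfl),
      if_neg (by rintro (h | h); exacts [hjk h.symm, hqk h.symm])]
    ring
  have hsall : ∀ i j k, i ≠ 0 → j ≠ 0 → k ≠ 0 → s3 i j k = 0 := by
    intro i j k hi hj hk
    obtain ⟨q, hq⟩ := pick {0, i, j, k} (card_le4 _ _ _ _)
    simp only [Finset.mem_insert, Finset.mem_singleton, not_or] at hq
    obtain ⟨hq0, hqi, hqj, hqk⟩ := hq
    by_cases hij : i = j
    · by_cases hik : i = k
      · -- i = j = k
        refine vanish3 i q i j k hi hq0 (Ne.symm hqi) ?_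
        rw [if_pos (Or.inl rfl), if_pos (Or.inl hij.symm), if_pos (Or.inl hik.symm)]
        ring
      · -- i = j ≠ k
        refine vanish3 k q i j k hk hq0 (Ne.symm hqk) ?_
        rw [if_neg (by rintro (h | h); exacts [hik h, hqi h.symm]),
          if_neg (by rintro (h | h); exacts [hik (hij.trans h), hqj h.symm]),
          if_pos (Or.inl rfl)]
        ring
    · by_cases hik : i = k
      · -- i = k ≠ j
        refine vanish3 j q i j k hj hq0 (Ne.symm hqj) ?_
        rw [if_neg (by rintro (h | h); exacts [hij h, hqi h.symm]),
          if_pos (Or.inl rfl),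
          if_neg (by rintro (h | h); exacts [hij (hik.trans h), hqk h.symm])]
        ring
      · -- i ≠ j, i ≠ k
        refine vanish3 i q i j k hi hq0 (Ne.symm hqi) ?_
        rw [if_pos (Or.inl rfl),
          if_neg (by rintro (h | h); exacts [hij h.symm, hqj h.symm]),
          if_neg (by rintro (h | h); exacts [hik h.symm, hqk h.symm])]
        ring
  have hs0eq : ∀ j, j ≠ 0 → s3 0 j j = s3 0 one one := by
    intro j hj
    by_cases h : j = one
    · rw [h]
    · exact swaps3 j one hj hone h
  have hpt3 : ∀ i j k, s3 i j k =
      (s3 0 0 0 - 3 * s3 0 one one) *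
        ((if i = 0 then (1:ℝ) else 0) * (if j = 0 then (1:ℝ) else 0) *
          (if k = 0 then (1:ℝ) else 0))
      + s3 0 one one *
        ((if i = 0 then (1:ℝ) else 0) * (if j = k then (1:ℝ) else 0)
          + (if j = 0 then (1:ℝ) else 0) * (if i = k then (1:ℝ) else 0)
          + (if k = 0 then (1:ℝ) else 0) * (if i = j then (1:ℝ) else 0)) := by
    intro i j k
    by_cases hi : i = 0 <;> by_cases hj : j = 0 <;> by_cases hk : k = 0
    · subst hi; subst hj; subst hk; simp; ring
    · subst hi; subst hj
      rw [hs00 k hk]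
      simp [hk, (Ne.symm hk : (0:Fin d) ≠ k)]
    · subst hi; subst hk
      have h : s3 0 j 0 = s3 0 0 j := hsB3 0 j 0
      rw [h, hs00 j hj]
      simp [hj, (Ne.symm hj : (0:Fin d) ≠ j)]
    · subst hi
      by_cases hjk : j = k
      · subst hjk
        rw [hs0eq j hj]
        simp [hj, (Ne.symm hj : (0:Fin d) ≠ j)]
      · rw [hsoffd j k hj hk hjk]
        simp [hj, hk, hjk, (Ne.symm hj : (0:Fin d) ≠ j), (Ne.symm hk : (0:Fin d) ≠ k)]
    · subst hj; subst hk
      have h : s3 i 0 0 = s3 0 0 i := (hsA3 i 0 0).trans (hsB3 0 i 0)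
      rw [h, hs00 i hi]
      simp [hi, (Ne.symm hi : (0:Fin d) ≠ i)]
    · subst hj
      have h : s3 i 0 k = s3 0 i k := hsA3 i 0 k
      by_cases hik : i = k
      · subst hik
        rw [h, hs0eq i hi]
        simp [hi, (Ne.symm hi : (0:Fin d) ≠ i)]
      · rw [h, hsoffd i k hi hk hik]
        simp [hi, hk, hik, (Ne.symm hi : (0:Fin d) ≠ i), (Ne.symm hk : (0:Fin d) ≠ k)]
    · subst hk
      have h : s3 i j 0 = s3 0 i j := (hsB3 i j 0).trans (hsA3 i 0 j)
      by_cases hij : i = j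
      · subst hij
        rw [h, hs0eq i hi]
        simp [hi, (Ne.symm hi : (0:Fin d) ≠ i)]
      · rw [h, hsoffd i j hi hj hij]
        simp [hi, hj, hij, (Ne.symm hi : (0:Fin d) ≠ i), (Ne.symm hj : (0:Fin d) ≠ j)]
    · rw [hsall i j k hi hj hk]
      simp [hi, hj, hk]
  -- expansions
  have hexp2 : ∀ u v : E d, T₂ u v = ∑ i, ∑ j, b.repr u i * b.repr v j * t i j := by
    intro u v
    conv_lhs => rw [← b.sum_repr u, ← b.sum_repr v]
    simp only [map_sum, LinearMap.sum_apply, _root_.map_smul, LinearMap.smul_apply,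
      smul_eq_mul, Finset.sum_apply, Finset.mul_sum]
    rw [Finset.sum_comm]
    refine Finset.sum_congr rfl fun i _ => Finset.sum_congr rfl fun j _ => ?_
    simp only [ht_def]
    ring
  have hexp3 : ∀ u v w : E d,
      T₃ u v w = ∑ i, ∑ j, ∑ k, b.repr u i * b.repr v j * b.repr w k * s3 i j k := by
    intro u v w
    conv_lhs => rw [← b.sum_repr u, ← b.sum_repr v, ← b.sum_repr w]
    simp only [map_sum, LinearMap.sum_apply, _root_.map_smul, LinearMap.smul_apply,
      smul_eq_mul, Finset.sum_apply, Finset.mul_sum]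
    rw [Finset.sum_comm]
    conv_lhs => enter [2, j]; rw [Finset.sum_comm]
    rw [Finset.sum_comm]
    refine Finset.sum_congr rfl fun i _ => Finset.sum_congr rfl fun j _ =>
      Finset.sum_congr rfl fun k _ => ?_
    simp only [hs3_def]
    ring
  have hrepr0 : ∀ u : E d, ⟪x, u⟫_ℝ = b.repr u 0 := by
    intro u
    rw [← hb0, ← b.repr_apply_apply]
  have hinner : ∀ u v : E d, ⟪u, v⟫_ℝ = ∑ i, b.repr u i * b.repr v i := by
    intro u v
    rw [← b.repr.inner_map_map u v, PiLp.inner_apply]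
    simp [RCLike.inner_apply, conj_trivial]
    exact Finset.sum_congr rfl fun i _ => mul_comm _ _
  constructor
  · refine ⟨t 0 0 - t one one, t one one, fun u v => ?_⟩
    rw [hexp2 u v, hrepr0 u, hrepr0 v, hinner u v]
    rw [Finset.sum_congr rfl fun i _ => Finset.sum_congr rfl fun j _ => by
      rw [hpt2 i j]]
    simp only [mul_add, mul_ite, ite_mul, mul_zero, zero_mul, mul_one, one_mul,
      Finset.sum_add_distrib, Finset.sum_ite_eq, Finset.sum_ite_eq',
      Finset.mem_univ, if_true, Finset.mul_sum]
    ring_nf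
  · refine ⟨s3 0 0 0 - 3 * s3 0 one one, s3 0 one one, fun u v w => ?_⟩
    have hterm : ∀ i j k : Fin d,
        b.repr u i * b.repr v j * b.repr w k * s3 i j k =
          (if i = 0 then if j = 0 then if k = 0 then
              (s3 0 0 0 - 3 * s3 0 one one) * (b.repr u i * b.repr v j * b.repr w k)
            else 0 else 0 else 0)
          + ((if i = 0 then if j = k then
                s3 0 one one * (b.repr u i * b.repr v j * b.repr w k) else 0 else 0)
            + (if j = 0 then if i = k then
                s3 0 one one * (b.repr u i * b.repr v j * b.repr w k) else 0 else 0)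
            + (if k = 0 then if i = j then
                s3 0 one one * (b.repr u i * b.repr v j * b.repr w k) else 0 else 0)) := by
      intro i j k
      rw [hpt3 i j k]
      split_ifs <;> first | ring | simp_all
    rw [hexp3 u v w, hrepr0 u, hrepr0 v, hrepr0 w, hinner v w, hinner u w, hinner u v]
    rw [Finset.sum_congr rfl fun i _ => Finset.sum_congr rfl fun j _ =>
      Finset.sum_congr rfl fun k _ => hterm i j k]
    simp only [Finset.sum_add_distrib, Finset.sum_ite_irrel, Finset.sum_ite_eq,
      Finset.sum_ite_eq', Finset.mem_univ, if_true, Finset.sum_const_zero]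
    simp only [mul_add, Finset.mul_sum]
    ring_nf

end Paper
end
end
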